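/- arXiv:1908.04110 — 7 statements merged into one kernel-verified Lean document; each statement's English description precedes it below -/
import Mathlib

section
/- Let (Ω, 𝔉, μ) be a probability space, let Θ ⊆ ℝ^p be a nonempty compact set, and let Q₀ : Θ → ℝ be continuous and uniquely maximized at θ₀ ∈ Θ (i.e. Q₀(θ) < Q₀(θ₀) for every θ ∈ Θ with θ ≠ θ₀). For each n ∈ ℕ let Q_n, Q̃_n : Ω × Θ → ℝ be such that Q̃_n(ω, ·) is continuous on Θ for every ω, and let θ̂_n : Ω → Θ satisfy Q̃_n(ω, θ̂_n(ω)) = sup_{θ∈Θ} Q̃_n(ω, θ) for every ω. Assume the maps ω ↦ sup_{θ∈Θ}|Q_n(ω,θ) − Q₀(θ)|, ω ↦ sup_{θ∈Θ}|Q̃_n(ω,θ) − Q_n(ω,θ)| and ω ↦ ‖θ̂_n(ω) − θ₀‖ are measurable, and that sup_{θ∈Θ}|Q_n − Q₀| → 0 in probability and sup_{θ∈Θ}|Q̃_n − Q_n| → 0 in probability as n → ∞. Then θ̂_n converges in probability to θ₀, i.e. for every ε > 0, μ{ω : ‖θ̂_n(ω) − θ₀‖ > ε} → 0 as n → ∞.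 -/
open MeasureTheory Filter Topology Set

/-!
Uniqueness of the maximiser of the continuous `Q₀` on the compact `Θ` gives a gap: off the
`ε`-ball around `θ₀`, `Q₀` stays below `Q₀ θ₀ - η` for some `η > 0`. Since `θ̂ₙ` maximises `Q̃ₙ`,
we have `Q₀ θ₀ - Q₀ θ̂ₙ ≤ 2 sup_Θ |Q̃ₙ - Q₀|`, so `‖θ̂ₙ - θ₀‖ > ε` forces one of the two uniform
errors `sup_Θ |Qₙ - Q₀|`, `sup_Θ |Q̃ₙ - Qₙ|` above `η / 5`, an event whose probability tends to `0`.
-/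

theorem IsCompact.exists_pos_add_le_of_forall_lt {X : Type*} [PseudoMetricSpace X] {K : Set X}
    (hK : IsCompact K) {f : X → ℝ} (hf : ContinuousOn f K) {x₀ : X}
    (hmax : ∀ x ∈ K, x ≠ x₀ → f x < f x₀) {ε : ℝ} (hε : 0 < ε) :
    ∃ η > 0, ∀ x ∈ K, ε ≤ dist x x₀ → f x + η ≤ f x₀ := by
  rcases (K ∩ {x | ε ≤ dist x x₀}).eq_empty_or_nonempty with hempty | hfar
  · exact ⟨1, one_pos, fun x hx hxε => ((hempty ▸ ⟨hx, hxε⟩ : x ∈ (∅ : Set X))).elim⟩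
  have hfar_cpt : IsCompact (K ∩ {x | ε ≤ dist x x₀}) :=
    hK.inter_right (isClosed_le continuous_const (continuous_id.dist continuous_const))
  obtain ⟨x₁, ⟨hx₁, hx₁ε⟩, hx₁max⟩ := hfar_cpt.exists_isMaxOn hfar (hf.mono inter_subset_left)
  have hx₁ne : x₁ ≠ x₀ := by
    rintro rfl
    simp only [mem_ofPred_eq, dist_self] at hx₁ε
    linarith
  refine ⟨f x₀ - f x₁, sub_pos.2 (hmax x₁ hx₁ hx₁ne), fun x hx hxε => ?_⟩
  have : f x ≤ f x₁ := hx₁max ⟨hx, hxε⟩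
  linarith

theorem IsMaxOn.sub_le_two_mul_of_abs_sub_le {X : Type*} {f g : X → ℝ} {s : Set X} {x₀ x₁ : X}
    {δ : ℝ} (hmax : IsMaxOn f s x₁) (hx₀ : x₀ ∈ s) (hx₁ : x₁ ∈ s)
    (hclose : ∀ x ∈ s, |f x - g x| ≤ δ) : g x₀ - g x₁ ≤ 2 * δ := by
  have h₀ := abs_le.1 (hclose x₀ hx₀)
  have h₁ := abs_le.1 (hclose x₁ hx₁)
  have : f x₀ ≤ f x₁ := hmax hx₀
  linarith [h₀.1, h₁.2]

theorem tendsto_measure_zero_of_subset_union {Ω ι : Type*} [MeasurableSpace Ω] {μ : Measure Ω}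
    {l : Filter ι} {A B C : ι → Set Ω} (hsub : ∀ i, A i ⊆ B i ∪ C i)
    (hB : Tendsto (fun i => μ (B i)) l (𝓝 0)) (hC : Tendsto (fun i => μ (C i)) l (𝓝 0)) :
    Tendsto (fun i => μ (A i)) l (𝓝 0) := by
  have hBC : Tendsto (fun i => μ (B i) + μ (C i)) l (𝓝 0) := by simpa using hB.add hC
  exact tendsto_of_tendsto_of_tendsto_of_le_of_le tendsto_const_nhds hBC (fun _ => zero_le)
    fun i => (measure_mono (hsub i)).trans (measure_union_le _ _)

theorem stmt_0_general {p : ℕ} {Ω : Type*} [MeasurableSpace Ω] (μ : Measure Ω)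
    {Θ : Set (EuclideanSpace ℝ (Fin p))} (hΘcpt : IsCompact Θ)
    (Q0 : EuclideanSpace ℝ (Fin p) → ℝ) (hQ0cont : ContinuousOn Q0 Θ)
    (θ0 : EuclideanSpace ℝ (Fin p)) (hθ0 : θ0 ∈ Θ)
    (hθ0max : ∀ θ ∈ Θ, θ ≠ θ0 → Q0 θ < Q0 θ0)
    (Q Qt : ℕ → Ω → EuclideanSpace ℝ (Fin p) → ℝ)
    (hQtcont : ∀ n ω, ContinuousOn (Qt n ω) Θ)
    (θhat : ℕ → Ω → EuclideanSpace ℝ (Fin p))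
    (hθhatmem : ∀ n ω, θhat n ω ∈ Θ)
    (hθhatmax : ∀ n ω, Qt n ω (θhat n ω) = sSup (Qt n ω '' Θ))
    (hbdd1 : ∀ n ω, BddAbove ((fun θ => |Q n ω θ - Q0 θ|) '' Θ))
    (hbdd2 : ∀ n ω, BddAbove ((fun θ => |Qt n ω θ - Q n ω θ|) '' Θ))
    (hplim1 : ∀ ε > (0 : ℝ), Tendsto
      (fun n => μ {ω | ε < sSup ((fun θ => |Q n ω θ - Q0 θ|) '' Θ)}) atTop (𝓝 0))
    (hplim2 : ∀ ε > (0 : ℝ), Tendsto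
      (fun n => μ {ω | ε < sSup ((fun θ => |Qt n ω θ - Q n ω θ|) '' Θ)}) atTop (𝓝 0)) :
    ∀ ε > (0 : ℝ), Tendsto (fun n => μ {ω | ε < ‖θhat n ω - θ0‖}) atTop (𝓝 0) := by
  intro ε hε
  obtain ⟨η, hη, hgap⟩ := hΘcpt.exists_pos_add_le_of_forall_lt hQ0cont hθ0max hε
  refine tendsto_measure_zero_of_subset_union (fun n ω hfar => ?_)
    (hplim1 (η / 5) (by positivity)) (hplim2 (η / 5) (by positivity))
  by_contra! hsmall
  simp only [mem_union, mem_ofPred_eq, not_or, not_lt] at hsmall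
  have hmax : IsMaxOn (Qt n ω) Θ (θhat n ω) := fun θ hθ => by
    rw [mem_ofPred_eq, hθhatmax]
    exact le_csSup (hΘcpt.image_of_continuousOn (hQtcont n ω)).bddAbove (mem_image_of_mem _ hθ)
  have hclose : ∀ θ ∈ Θ, |Qt n ω θ - Q0 θ| ≤ η / 5 + η / 5 := fun θ hθ =>
    calc |Qt n ω θ - Q0 θ| ≤ |Qt n ω θ - Q n ω θ| + |Q n ω θ - Q0 θ| := abs_sub_le _ _ _
      _ ≤ η / 5 + η / 5 := add_le_add
        ((le_csSup (hbdd2 n ω) (mem_image_of_mem _ hθ)).trans hsmall.2)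
        ((le_csSup (hbdd1 n ω) (mem_image_of_mem _ hθ)).trans hsmall.1)
  have hgain := hmax.sub_le_two_mul_of_abs_sub_le hθ0 (hθhatmem n ω) hclose
  have hloss := hgap _ (hθhatmem n ω) (by rw [dist_eq_norm]; exact le_of_lt hfar)
  linarith

/-- Theorem 2 of the paper: consistency of the approximated M-estimator. -/
theorem stmt_0 {p : ℕ} {Ω : Type*} [MeasurableSpace Ω] (μ : Measure Ω) [IsProbabilityMeasure μ]
    {Θ : Set (EuclideanSpace ℝ (Fin p))} (hΘne : Θ.Nonempty) (hΘcpt : IsCompact Θ)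
    (Q0 : EuclideanSpace ℝ (Fin p) → ℝ) (hQ0cont : ContinuousOn Q0 Θ)
    (θ0 : EuclideanSpace ℝ (Fin p)) (hθ0 : θ0 ∈ Θ)
    (hθ0max : ∀ θ ∈ Θ, θ ≠ θ0 → Q0 θ < Q0 θ0)
    (Q Qt : ℕ → Ω → EuclideanSpace ℝ (Fin p) → ℝ)
    (hQtcont : ∀ n ω, ContinuousOn (Qt n ω) Θ)
    (θhat : ℕ → Ω → EuclideanSpace ℝ (Fin p))
    (hθhatmem : ∀ n ω, θhat n ω ∈ Θ)
    (hθhatmax : ∀ n ω, Qt n ω (θhat n ω) = sSup (Qt n ω '' Θ))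
    (hbdd1 : ∀ n ω, BddAbove ((fun θ => |Q n ω θ - Q0 θ|) '' Θ))
    (hbdd2 : ∀ n ω, BddAbove ((fun θ => |Qt n ω θ - Q n ω θ|) '' Θ))
    (hmeas1 : ∀ n, Measurable fun ω => sSup ((fun θ => |Q n ω θ - Q0 θ|) '' Θ))
    (hmeas2 : ∀ n, Measurable fun ω => sSup ((fun θ => |Qt n ω θ - Q n ω θ|) '' Θ))
    (hmeas3 : ∀ n, Measurable fun ω => ‖θhat n ω - θ0‖)
    (hplim1 : ∀ ε > (0 : ℝ), Tendsto
      (fun n => μ {ω | ε < sSup ((fun θ => |Q n ω θ - Q0 θ|) '' Θ)}) atTop (𝓝 0))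
    (hplim2 : ∀ ε > (0 : ℝ), Tendsto
      (fun n => μ {ω | ε < sSup ((fun θ => |Qt n ω θ - Q n ω θ|) '' Θ)}) atTop (𝓝 0)) :
    ∀ ε > (0 : ℝ), Tendsto (fun n => μ {ω | ε < ‖θhat n ω - θ0‖}) atTop (𝓝 0) :=
  stmt_0_general μ hΘcpt Q0 hQ0cont θ0 hθ0 hθ0max Q Qt hQtcont θhat hθhatmem hθhatmax hbdd1 hbdd2
    hplim1 hplim2
end

section
/- Let (Ω, 𝔉, μ) be a probability space, Θ ⊆ ℝ^p a nonempty compact set, Z a nonempty set, and z_i : Ω → Z (i = 1, 2, …) a sequence of maps (the data). Let f : Z × Θ → ℝ satisfy f(z,θ) ≥ δ̄ for some δ̄ > 0 and all z, θ. For each r ∈ ℕ let f̃_r : Z × Θ → ℝ be continuous in θ and assume sup_{z∈Z, θ∈Θ}|f̃_r(z,θ) − f(z,θ)| → 0 as r → ∞. Let R : ℕ → ℕ be monotonically increasing with R(n) → ∞. Define L_n(ω, θ) = (1/n) Σ_{i=1}^n log f(z_i(ω), θ) and L̃_n(ω, θ) = (1/n) Σ_{i=1}^n log f̃_{R(n)}(z_i(ω),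 θ). Let Q₀ : Θ → ℝ be continuous and uniquely maximized at θ₀ ∈ Θ, and assume sup_{θ∈Θ}|L_n(ω,θ) − Q₀(θ)| → 0 in probability. Let θ̂_n : Ω → Θ satisfy L̃_n(ω, θ̂_n(ω)) = sup_{θ∈Θ} L̃_n(ω, θ) for every ω, and assume the maps ω ↦ sup_θ|L_n − Q₀|, ω ↦ sup_θ|L̃_n − L_n| and ω ↦ ‖θ̂_n(ω) − θ₀‖ are measurable. Then the maximum approximated likelihood estimator θ̂_n converges in probability to θ₀: for every ε > 0, μ{ω : ‖θ̂_n(ω) − θ₀‖ > ε} → 0 as n → ∞. -/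
open MeasureTheory Filter Topology

/-!
A continuous criterion with a unique maximum on a compact set has a well-separated maximum:
outside the ε-ball around θ₀ it stays below `Q₀ θ₀ - η` for some `η > 0`. Any maximizer of a
function uniformly within `η / 3` of `Q₀` therefore lies in that ball. Since `f ≥ δ̄ > 0` and
`log` is `2/δ̄`-Lipschitz on `[δ̄/2, ∞)`, the uniform convergence `f̃_r → f` makes
`sup |L̃_n - L_n|` uniformly small once `R(n)` is large, so `‖θ̂_n - θ₀‖ > ε` forces
`sup |L_n - Q₀| > η / 6`, an event whose probability tends to `0`.
-/

lemma IsCompact.exists_pos_forall_dist_le_of_unique_max {α : Type*} [PseudoMetricSpace α]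
    {s : Set α} (hs : IsCompact s) {Q : α → ℝ} (hQ : ContinuousOn Q s) {x₀ : α}
    (hmax : ∀ x ∈ s, x ≠ x₀ → Q x < Q x₀) {ε : ℝ} (hε : 0 < ε) :
    ∃ η > 0, ∀ x ∈ s, Q x₀ < Q x + η → dist x x₀ ≤ ε := by
  set K := s ∩ {x | ε ≤ dist x x₀}
  have hK : IsCompact K :=
    hs.inter_right (isClosed_le continuous_const (continuous_id.dist continuous_const))
  have hne_of_mem {x} (hx : x ∈ K) : x ≠ x₀ := by
    rintro rfl
    exact (hε.trans_le hx.2).ne' (dist_self x)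
  rcases K.eq_empty_or_nonempty with hKe | hKne
  · refine ⟨1, one_pos, fun x hx _ => not_lt.1 fun hfar => ?_⟩
    exact hKe.subset ⟨hx, hfar.le⟩
  obtain ⟨x₁, hx₁, hx₁max⟩ := hK.exists_isMaxOn hKne (hQ.mono Set.inter_subset_left)
  refine ⟨Q x₀ - Q x₁, sub_pos.2 (hmax x₁ hx₁.1 (hne_of_mem hx₁)), fun x hx hclose => ?_⟩
  by_contra! hfar
  have : Q x ≤ Q x₁ := hx₁max ⟨hx, hfar.le⟩
  linarith

lemma IsCompact.exists_pos_forall_dist_le_of_abs_sub_le {α : Type*} [PseudoMetricSpace α]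
    {s : Set α} (hs : IsCompact s) {Q : α → ℝ} (hQ : ContinuousOn Q s) {x₀ : α} (hx₀ : x₀ ∈ s)
    (hmax : ∀ x ∈ s, x ≠ x₀ → Q x < Q x₀) {ε : ℝ} (hε : 0 < ε) :
    ∃ η > 0, ∀ (G : α → ℝ), (∀ x ∈ s, |G x - Q x| ≤ η) →
      ∀ x ∈ s, G x₀ ≤ G x → dist x x₀ ≤ ε := by
  obtain ⟨η, hη, hsep⟩ := hs.exists_pos_forall_dist_le_of_unique_max hQ hmax hε
  refine ⟨η / 3, by positivity, fun G hG x hx hGx => hsep x hx ?_⟩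
  linarith [abs_le.1 (hG x hx), abs_le.1 (hG x₀ hx₀)]

lemma bddAbove_image_of_abs_sub_le {α : Type*} {s : Set α} {f g : α → ℝ} {c : ℝ}
    (hg : BddAbove (g '' s)) (h : ∀ x ∈ s, |f x - g x| ≤ c) : BddAbove (f '' s) := by
  obtain ⟨M, hM⟩ := hg
  refine ⟨M + c, ?_⟩
  rintro _ ⟨x, hx, rfl⟩
  linarith [hM ⟨x, hx, rfl⟩, abs_le.1 (h x hx)]

lemma Real.abs_log_sub_log_le_div {a b c : ℝ} (hc : 0 < c) (ha : c ≤ a) (hb : c ≤ b) :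
    |Real.log a - Real.log b| ≤ |a - b| / c := by
  have key {x y : ℝ} (hx : c ≤ x) (hy : c ≤ y) : Real.log x - Real.log y ≤ |x - y| / c := by
    have hy₀ : 0 < y := hc.trans_le hy
    calc Real.log x - Real.log y = Real.log (x / y) := (Real.log_div (by linarith) hy₀.ne').symm
      _ ≤ x / y - 1 := Real.log_le_sub_one_of_pos (div_pos (hc.trans_le hx) hy₀)
      _ = (x - y) / y := by field_simp
      _ ≤ |x - y| / y := by gcongr; exact le_abs_self _
      _ ≤ |x - y| / c := by gcongr
  have hba := key hb ha
  rw [abs_sub_comm] at hba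
  exact abs_le.2 ⟨by linarith, key ha hb⟩

lemma exists_forall_abs_log_sub_log_le {α β : Type*} {s : Set β} {F : ℕ → α → β → ℝ}
    {f : α → β → ℝ} {δ : ℝ} (hδ : 0 < δ) (hf : ∀ a, ∀ x ∈ s, δ ≤ f a x)
    (hF : ∀ ε > (0 : ℝ), ∃ r₀ : ℕ, ∀ r ≥ r₀, ∀ a, ∀ x ∈ s, |F r a x - f a x| ≤ ε)
    {η : ℝ} (hη : 0 < η) :
    ∃ r₀ : ℕ, ∀ r ≥ r₀, ∀ a, ∀ x ∈ s, |Real.log (F r a x) - Real.log (f a x)| ≤ η := by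
  obtain ⟨r₀, hr₀⟩ := hF (min (δ / 2) (η * δ / 2)) (by positivity)
  refine ⟨r₀, fun r hr a x hx => ?_⟩
  have hclose := hr₀ r hr a x hx
  have hFx : δ / 2 ≤ F r a x := by
    linarith [hf a x hx, (abs_le.1 (hclose.trans (min_le_left _ _))).1]
  calc |Real.log (F r a x) - Real.log (f a x)|
      ≤ |F r a x - f a x| / (δ / 2) :=
        Real.abs_log_sub_log_le_div (by positivity) hFx (by linarith [hf a x hx])
    _ ≤ (η * δ / 2) / (δ / 2) := by gcongr; exact hclose.trans (min_le_right _ _)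
    _ = η := by field_simp

lemma abs_avg_sub_avg_le {a b : ℕ → ℝ} {n : ℕ} {c : ℝ} (hc : 0 ≤ c)
    (h : ∀ i < n, |a i - b i| ≤ c) :
    |(n : ℝ)⁻¹ * ∑ i ∈ Finset.range n, a i - (n : ℝ)⁻¹ * ∑ i ∈ Finset.range n, b i| ≤ c := by
  rcases n.eq_zero_or_pos with rfl | hn
  · simpa using hc
  rw [← mul_sub, ← Finset.sum_sub_distrib, abs_mul, abs_inv, Nat.abs_cast,
    inv_mul_le_iff₀ (by exact_mod_cast hn)]
  calc |∑ i ∈ Finset.range n, (a i - b i)| ≤ ∑ i ∈ Finset.range n, |a i - b i| :=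
        Finset.abs_sum_le_sum_abs _ _
    _ ≤ ∑ _i ∈ Finset.range n, c :=
        Finset.sum_le_sum fun i hi => h i (Finset.mem_range.1 hi)
    _ = n * c := by simp

theorem stmt_4_general {p : ℕ} {Ω : Type*} [MeasurableSpace Ω] (μ : Measure Ω) [IsProbabilityMeasure μ]
    {Θ : Set (EuclideanSpace ℝ (Fin p))} (hΘcpt : IsCompact Θ)
    {Z : Type*} (z : ℕ → Ω → Z)
    (f : Z → EuclideanSpace ℝ (Fin p) → ℝ)
    (δbar : ℝ) (hδbar : 0 < δbar) (hf : ∀ zz, ∀ θ ∈ Θ, δbar ≤ f zz θ)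
    (ft : ℕ → Z → EuclideanSpace ℝ (Fin p) → ℝ)
    (hconv : ∀ ε > (0 : ℝ), ∃ r0 : ℕ, ∀ r ≥ r0, ∀ zz, ∀ θ ∈ Θ, |ft r zz θ - f zz θ| ≤ ε)
    (R : ℕ → ℕ) (hRtop : Tendsto R atTop atTop)
    (Q0 : EuclideanSpace ℝ (Fin p) → ℝ) (hQ0cont : ContinuousOn Q0 Θ)
    (θ0 : EuclideanSpace ℝ (Fin p)) (hθ0 : θ0 ∈ Θ)
    (hθ0max : ∀ θ ∈ Θ, θ ≠ θ0 → Q0 θ < Q0 θ0)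
    (θhat : ℕ → Ω → EuclideanSpace ℝ (Fin p)) (hθhatmem : ∀ n ω, θhat n ω ∈ Θ)
    (hargmax : ∀ (n : ℕ) ω,
      (n : ℝ)⁻¹ * ∑ i ∈ Finset.range n, Real.log (ft (R n) (z i ω) (θhat n ω)) =
        sSup ((fun θ => (n : ℝ)⁻¹ *
          ∑ i ∈ Finset.range n, Real.log (ft (R n) (z i ω) θ)) '' Θ))
    (hbdd1 : ∀ (n : ℕ) ω, BddAbove ((fun θ =>
      |(n : ℝ)⁻¹ * ∑ i ∈ Finset.range n, Real.log (f (z i ω) θ) - Q0 θ|) '' Θ))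
    (hplim : ∀ ε > (0 : ℝ), Tendsto (fun n : ℕ => μ {ω | ε <
      sSup ((fun θ =>
        |(n : ℝ)⁻¹ * ∑ i ∈ Finset.range n, Real.log (f (z i ω) θ) - Q0 θ|) '' Θ)})
      atTop (𝓝 0)) :
    ∀ ε > (0 : ℝ), Tendsto (fun n => μ {ω | ε < ‖θhat n ω - θ0‖}) atTop (𝓝 0) := by
  intro ε hε
  obtain ⟨η, hη, hargmax_close⟩ :=
    hΘcpt.exists_pos_forall_dist_le_of_abs_sub_le hQ0cont hθ0 hθ0max hε
  obtain ⟨r₀, hlog⟩ := exists_forall_abs_log_sub_log_le hδbar hf hconv (half_pos hη)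
  have hQ0bdd : BddAbove (Q0 '' Θ) := (hΘcpt.image_of_continuousOn hQ0cont).bddAbove
  refine tendsto_of_tendsto_of_tendsto_of_le_of_le' tendsto_const_nhds
    (hplim (η / 2) (half_pos hη)) (Eventually.of_forall fun _ => zero_le) ?_
  filter_upwards [hRtop.eventually_ge_atTop r₀] with n hn
  refine measure_mono fun ω (hfar : ε < ‖θhat n ω - θ0‖) => ?_
  show η / 2 < _
  by_contra! hsmall
  set L := fun θ => (n : ℝ)⁻¹ * ∑ i ∈ Finset.range n, Real.log (f (z i ω) θ)
  set Lt := fun θ => (n : ℝ)⁻¹ * ∑ i ∈ Finset.range n, Real.log (ft (R n) (z i ω) θ)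
  have hLQ0 (θ) (hθ : θ ∈ Θ) : |L θ - Q0 θ| ≤ η / 2 :=
    (le_csSup (hbdd1 n ω) ⟨θ, hθ, rfl⟩).trans hsmall
  have hLtL (θ) (hθ : θ ∈ Θ) : |Lt θ - L θ| ≤ η / 2 :=
    abs_avg_sub_avg_le (half_pos hη).le fun i _ => hlog (R n) hn (z i ω) θ hθ
  have hLtQ0 (θ) (hθ : θ ∈ Θ) : |Lt θ - Q0 θ| ≤ η := by
    linarith [abs_sub_le (Lt θ) (L θ) (Q0 θ), hLQ0 θ hθ, hLtL θ hθ]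
  -- `Lt` is bounded above on `Θ`, being close to `Q0`, so `hargmax` is not about a junk `sSup`.
  have hθhat_max : Lt θ0 ≤ Lt (θhat n ω) :=
    (le_csSup (bddAbove_image_of_abs_sub_le hQ0bdd hLtQ0) ⟨θ0, hθ0, rfl⟩).trans_eq
      (hargmax n ω).symm
  have hclose := hargmax_close Lt hLtQ0 _ (hθhatmem n ω) hθhat_max
  rw [dist_eq_norm] at hclose
  exact hfar.not_ge hclose

/-- Theorem 6 of the paper: consistency of the maximum approximated likelihood estimator.
Here `L_n(ω,θ) = (1/n) ∑ log f(z_i(ω),θ)` and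
`L̃_n(ω,θ) = (1/n) ∑ log f̃_{R(n)}(z_i(ω),θ)` are written out explicitly. -/
theorem stmt_4 {p : ℕ} {Ω : Type*} [MeasurableSpace Ω] (μ : Measure Ω) [IsProbabilityMeasure μ]
    {Θ : Set (EuclideanSpace ℝ (Fin p))} (hΘne : Θ.Nonempty) (hΘcpt : IsCompact Θ)
    {Z : Type*} [Nonempty Z] (z : ℕ → Ω → Z)
    (f : Z → EuclideanSpace ℝ (Fin p) → ℝ)
    (δbar : ℝ) (hδbar : 0 < δbar) (hf : ∀ zz, ∀ θ ∈ Θ, δbar ≤ f zz θ)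
    (ft : ℕ → Z → EuclideanSpace ℝ (Fin p) → ℝ)
    (hftcont : ∀ r zz, ContinuousOn (ft r zz) Θ)
    (hconv : ∀ ε > (0 : ℝ), ∃ r0 : ℕ, ∀ r ≥ r0, ∀ zz, ∀ θ ∈ Θ, |ft r zz θ - f zz θ| ≤ ε)
    (R : ℕ → ℕ) (hRmono : Monotone R) (hRtop : Tendsto R atTop atTop)
    (Q0 : EuclideanSpace ℝ (Fin p) → ℝ) (hQ0cont : ContinuousOn Q0 Θ)
    (θ0 : EuclideanSpace ℝ (Fin p)) (hθ0 : θ0 ∈ Θ)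
    (hθ0max : ∀ θ ∈ Θ, θ ≠ θ0 → Q0 θ < Q0 θ0)
    (θhat : ℕ → Ω → EuclideanSpace ℝ (Fin p)) (hθhatmem : ∀ n ω, θhat n ω ∈ Θ)
    (hargmax : ∀ (n : ℕ) ω,
      (n : ℝ)⁻¹ * ∑ i ∈ Finset.range n, Real.log (ft (R n) (z i ω) (θhat n ω)) =
        sSup ((fun θ => (n : ℝ)⁻¹ *
          ∑ i ∈ Finset.range n, Real.log (ft (R n) (z i ω) θ)) '' Θ))
    (hbdd1 : ∀ (n : ℕ) ω, BddAbove ((fun θ =>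
      |(n : ℝ)⁻¹ * ∑ i ∈ Finset.range n, Real.log (f (z i ω) θ) - Q0 θ|) '' Θ))
    (hmeas1 : ∀ n : ℕ, Measurable fun ω =>
      sSup ((fun θ =>
        |(n : ℝ)⁻¹ * ∑ i ∈ Finset.range n, Real.log (f (z i ω) θ) - Q0 θ|) '' Θ))
    (hmeas2 : ∀ n : ℕ, Measurable fun ω =>
      sSup ((fun θ =>
        |(n : ℝ)⁻¹ * ∑ i ∈ Finset.range n, Real.log (ft (R n) (z i ω) θ) -
          (n : ℝ)⁻¹ * ∑ i ∈ Finset.range n, Real.log (f (z i ω) θ)|) '' Θ))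
    (hmeas3 : ∀ n, Measurable fun ω => ‖θhat n ω - θ0‖)
    (hplim : ∀ ε > (0 : ℝ), Tendsto (fun n : ℕ => μ {ω | ε <
      sSup ((fun θ =>
        |(n : ℝ)⁻¹ * ∑ i ∈ Finset.range n, Real.log (f (z i ω) θ) - Q0 θ|) '' Θ)})
      atTop (𝓝 0)) :
    ∀ ε > (0 : ℝ), Tendsto (fun n => μ {ω | ε < ‖θhat n ω - θ0‖}) atTop (𝓝 0) :=
  stmt_4_general μ hΘcpt z f δbar hδbar hf ft hconv R hRtop Q0 hQ0cont θ0 hθ0 hθ0max θhat hθhatmem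
    hargmax hbdd1 hplim
end

section
/- Let E : ℕ → ℝ with E(r) ≥ 0 for all r, and suppose there exist constants c > 0, α > 0, β > 0 and r₁ ∈ ℕ such that E(r) ≤ c · exp(−α r^β) for all r ≥ r₁. Let γ > 1/2 and let R : ℕ → ℕ satisfy R(n) ≥ ⌈((log c)/α + (γ/α) · log n)^{1/β}⌉ for all n with (log c)/α + (γ/α) log n > 0. Then √n · E(R(n)) → 0 as n → ∞; in fact √n · E(R(n)) ≤ n^{1/2 − γ} for all sufficiently large n. -/
open Filter Topology Real

/-!
Since `E(r) ≤ c exp(-α r^β)` is decreasing in `r`, it suffices to know `R(n)^β` is at least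
`L(n) := (log c)/α + (γ/α) log n`; the ceiling in the hypothesis on `R` guarantees exactly this.
The choice of `L(n)` makes `c exp(-α L(n)) = n^{-γ}`, so `√n · E(R(n)) ≤ n^{1/2-γ}`, which tends
to `0` because `γ > 1/2`.
-/

lemma le_natCast_rpow_of_ceil_rpow_inv_le {x β : ℝ} {r : ℕ} (hx : 0 ≤ x) (hβ : 0 < β)
    (h : ⌈x ^ (1 / β)⌉₊ ≤ r) : x ≤ (r : ℝ) ^ β := by
  have hroot : x ^ (1 / β) ≤ r := (Nat.le_ceil _).trans (by exact_mod_cast h)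
  calc x = (x ^ (1 / β)) ^ β := by rw [← rpow_mul hx, one_div_mul_cancel hβ.ne', rpow_one]
    _ ≤ (r : ℝ) ^ β := by gcongr

lemma mul_exp_neg_mul_log_link {c α γ x : ℝ} (hc : 0 < c) (hα : 0 < α) (hx : 0 < x) :
    c * exp (-(α * (log c / α + γ / α * log x))) = x ^ (-γ) := by
  have hlink : α * (log c / α + γ / α * log x) = log c + γ * log x := by
    field_simp
  rw [hlink, neg_add, exp_add, exp_neg, exp_log hc, rpow_def_of_pos hx, ← neg_mul, mul_comm (-γ)]
  field_simp

lemma tendsto_log_link_atTop {c α γ : ℝ} (hα : 0 < α) (hγ : 0 < γ) :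
    Tendsto (fun n : ℕ => log c / α + γ / α * log n) atTop atTop :=
  tendsto_atTop_add_const_left _ _ <|
    (tendsto_log_atTop.comp tendsto_natCast_atTop_atTop).const_mul_atTop (div_pos hγ hα)

lemma eventually_le_rpow_neg_of_le_mul_exp_neg {E : ℕ → ℝ} {c α β γ : ℝ} {r₁ : ℕ}
    (hc : 0 < c) (hα : 0 < α) (hβ : 0 < β) (hγ : 0 < γ)
    (hrate : ∀ r : ℕ, r₁ ≤ r → E r ≤ c * exp (-(α * (r : ℝ) ^ β)))
    {R : ℕ → ℕ}
    (hR : ∀ n : ℕ, 0 < log c / α + γ / α * log n →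
      ⌈(log c / α + γ / α * log n) ^ (1 / β)⌉₊ ≤ R n) :
    ∀ᶠ n : ℕ in atTop, E (R n) ≤ (n : ℝ) ^ (-γ) := by
  have hlink := tendsto_log_link_atTop (c := c) hα hγ
  filter_upwards [hlink.eventually_gt_atTop 0, hlink.eventually_ge_atTop ((r₁ : ℝ) ^ β),
    eventually_gt_atTop 0] with n hpos hlarge hn
  have hRβ := le_natCast_rpow_of_ceil_rpow_inv_le hpos.le hβ (hR n hpos)
  have hr₁ : r₁ ≤ R n := by
    have : (r₁ : ℝ) ^ β ≤ (R n : ℝ) ^ β := hlarge.trans hRβ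
    exact_mod_cast (rpow_le_rpow_iff (by positivity) (by positivity) hβ).mp this
  calc E (R n) ≤ c * exp (-(α * (R n : ℝ) ^ β)) := hrate _ hr₁
    _ ≤ c * exp (-(α * (log c / α + γ / α * log n))) := by gcongr
    _ = (n : ℝ) ^ (-γ) := mul_exp_neg_mul_log_link hc hα (by exact_mod_cast hn)

lemma sqrt_mul_rpow_neg {x : ℝ} (hx : 0 < x) (γ : ℝ) : √x * x ^ (-γ) = x ^ (1 / 2 - γ) := by
  rw [sqrt_eq_rpow, ← rpow_add hx, sub_eq_add_neg]

lemma tendsto_natCast_rpow_atTop_nhds_zero {s : ℝ} (hs : s < 0) :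
    Tendsto (fun n : ℕ => (n : ℝ) ^ s) atTop (𝓝 0) := by
  simpa [Function.comp_def] using
    (tendsto_rpow_neg_atTop (neg_pos.mpr hs)).comp tendsto_natCast_atTop_atTop

/-- Theorem 9(b) of the paper: under an exponential convergence rate
`E(r) ≤ c exp(-α r^β)` (for all sufficiently large `r`), the link function
`R(n) ≥ ⌈((log c)/α + (γ/α) log n)^{1/β}⌉` with `γ > 1/2` yields
`√n · E(R(n)) → 0`, and indeed `√n · E(R(n)) ≤ n^{1/2-γ}` eventually. -/
theorem stmt_6 (E : ℕ → ℝ) (hE : ∀ r, 0 ≤ E r)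
    (c α β : ℝ) (hc : 0 < c) (hα : 0 < α) (hβ : 0 < β) (r1 : ℕ)
    (hrate : ∀ r : ℕ, r1 ≤ r → E r ≤ c * Real.exp (-(α * (r : ℝ) ^ β)))
    (γ : ℝ) (hγ : 1 / 2 < γ)
    (R : ℕ → ℕ)
    (hR : ∀ n : ℕ, 0 < Real.log c / α + γ / α * Real.log n →
      ⌈(Real.log c / α + γ / α * Real.log n) ^ (1 / β)⌉₊ ≤ R n) :
    Tendsto (fun n : ℕ => Real.sqrt n * E (R n)) atTop (𝓝 0) ∧
      ∃ N : ℕ, ∀ n ≥ N, Real.sqrt n * E (R n) ≤ (n : ℝ) ^ (1 / 2 - γ) := by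
  have hbound : ∀ᶠ n : ℕ in atTop, √n * E (R n) ≤ (n : ℝ) ^ (1 / 2 - γ) := by
    filter_upwards [eventually_le_rpow_neg_of_le_mul_exp_neg hc hα hβ (by linarith) hrate hR,
      eventually_gt_atTop 0] with n hE_le hn
    calc √n * E (R n) ≤ √n * (n : ℝ) ^ (-γ) := by gcongr
      _ = (n : ℝ) ^ (1 / 2 - γ) := sqrt_mul_rpow_neg (by exact_mod_cast hn) γ
  refine ⟨squeeze_zero' (.of_forall fun n => mul_nonneg (sqrt_nonneg _) (hE _)) hbound ?_,
    eventually_atTop.mp hbound⟩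
  exact tendsto_natCast_rpow_atTop_nhds_zero (by linarith)
end

section
/- Let Θ ⊆ ℝ^p and Z be nonempty sets, let δ ∈ (0,1), and let f, f̃ : Z × ℝ^p → ℝ be such that for each z ∈ Z the maps θ ↦ f(z,θ) and θ ↦ f̃(z,θ) are differentiable, with f(z,θ) ≥ δ and f̃(z,θ) ≥ δ for all z ∈ Z, θ ∈ Θ, and with M := sup_{z∈Z,θ∈Θ} ‖∇_θ f(z,θ)‖ < ∞. Set C₁(f) := (1 + M)/δ². Then for every n ≥ 1 and every z₁, …, z_n ∈ Z, sup_{θ∈Θ} ‖(1/n) Σ_{i=1}^n ∇_θ log f̃(z_i,θ) − (1/n) Σ_{i=1}^n ∇_θ log f(z_i,θ)‖ ≤ C₁(f) · ( sup_{z∈Z,θ∈Θ}|f̃(z,θ) − f(z,θ)| + sup_{z∈Z,θ∈Θ}‖∇_θ f̃(z,θ) − ∇_θ f(z,θ)‖ ), provided the suprema on the right-hand side are finite. -/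
/-!
The score of `log g` is `∇g / g`, so the difference of the two scores splits as
`∇f̃/f̃ - ∇f/f = (∇f̃ - ∇f)/f̃ + (1/f̃ - 1/f) ∇f`. With `f, f̃ ≥ δ` the first term is at most
`‖∇f̃ - ∇f‖/δ` and the second at most `|f̃ - f| M/δ²`; since `δ < 1` both are dominated by
`C₁(f)` times the sum of the two approximation errors, and averaging over the sample
preserves the bound.
-/

theorem norm_inv_smul_sub_inv_smul_le {E : Type*} [SeminormedAddCommGroup E] [NormedSpace ℝ E]
    {δ s t : ℝ} (a b : E) (hδ : 0 < δ) (hs : δ ≤ s) (ht : δ ≤ t) :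
    ‖s⁻¹ • a - t⁻¹ • b‖ ≤ δ⁻¹ * ‖a - b‖ + |s - t| / δ ^ 2 * ‖b‖ := by
  have hs0 : 0 < s := hδ.trans_le hs
  have ht0 : 0 < t := hδ.trans_le ht
  have hsplit : s⁻¹ • a - t⁻¹ • b = s⁻¹ • (a - b) + (s⁻¹ - t⁻¹) • b := by
    rw [smul_sub, sub_smul]; abel
  have hfirst : ‖s⁻¹‖ ≤ δ⁻¹ := by
    rw [Real.norm_of_nonneg (inv_nonneg.2 hs0.le)]
    exact inv_anti₀ hδ hs
  have hsecond : ‖s⁻¹ - t⁻¹‖ ≤ |s - t| / δ ^ 2 := by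
    rw [inv_sub_inv hs0.ne' ht0.ne', Real.norm_eq_abs, abs_div, abs_sub_comm,
      abs_of_pos (mul_pos hs0 ht0)]
    gcongr
    nlinarith
  calc ‖s⁻¹ • a - t⁻¹ • b‖ ≤ ‖s⁻¹‖ * ‖a - b‖ + ‖s⁻¹ - t⁻¹‖ * ‖b‖ := by
        rw [hsplit]; exact (norm_add_le _ _).trans (by rw [norm_smul, norm_smul])
    _ ≤ δ⁻¹ * ‖a - b‖ + |s - t| / δ ^ 2 * ‖b‖ := by gcongr

section Gradient

variable {F : Type*} [NormedAddCommGroup F] [InnerProductSpace ℝ F] [CompleteSpace F]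
  {g : F → ℝ} {g' x : F}

theorem HasGradientAt.log (hg : HasGradientAt g g' x) (hx : g x ≠ 0) :
    HasGradientAt (fun y => Real.log (g y)) ((g x)⁻¹ • g') x := by
  rw [hasGradientAt_iff_hasFDerivAt, map_smul]
  exact hg.hasFDerivAt.log hx

theorem gradient_log (hg : DifferentiableAt ℝ g x) (hx : g x ≠ 0) :
    gradient (fun y => Real.log (g y)) x = (g x)⁻¹ • gradient g x :=
  (hg.hasGradientAt.log hx).gradient

theorem norm_gradient_log_sub_gradient_log_le {h : F → ℝ} {δ : ℝ}
    (hg : DifferentiableAt ℝ g x) (hh : DifferentiableAt ℝ h x)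
    (hδ : 0 < δ) (hgx : δ ≤ g x) (hhx : δ ≤ h x) :
    ‖gradient (fun y => Real.log (g y)) x - gradient (fun y => Real.log (h y)) x‖ ≤
      δ⁻¹ * ‖gradient g x - gradient h x‖ + |g x - h x| / δ ^ 2 * ‖gradient h x‖ := by
  rw [gradient_log hg (hδ.trans_le hgx).ne', gradient_log hh (hδ.trans_le hhx).ne']
  exact norm_inv_smul_sub_inv_smul_le _ _ hδ hgx hhx

end Gradient

theorem inv_mul_add_div_sq_mul_le {δ M e₀ e₁ : ℝ} (hδ : 0 < δ) (hδ₁ : δ ≤ 1) (hM : 0 ≤ M)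
    (he₀ : 0 ≤ e₀) (he₁ : 0 ≤ e₁) :
    δ⁻¹ * e₁ + e₀ / δ ^ 2 * M ≤ (1 + M) / δ ^ 2 * (e₀ + e₁) := by
  have hδe₁ : δ * e₁ ≤ e₁ := mul_le_of_le_one_left he₁ hδ₁
  calc δ⁻¹ * e₁ + e₀ / δ ^ 2 * M = (δ * e₁ + e₀ * M) / δ ^ 2 := by field_simp
    _ ≤ (1 + M) * (e₀ + e₁) / δ ^ 2 := by gcongr; nlinarith [mul_nonneg hM he₁]
    _ = (1 + M) / δ ^ 2 * (e₀ + e₁) := by ring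

theorem norm_inv_natCast_smul_sum_le {E : Type*} [SeminormedAddCommGroup E] [NormedSpace ℝ E]
    {n : ℕ} {v : Fin n → E} {B : ℝ} (hB : 0 ≤ B) (hv : ∀ i, ‖v i‖ ≤ B) :
    ‖(n : ℝ)⁻¹ • ∑ i, v i‖ ≤ B := by
  calc ‖(n : ℝ)⁻¹ • ∑ i, v i‖ ≤ (n : ℝ)⁻¹ * (n * B) := by
        rw [norm_smul, Real.norm_of_nonneg (by positivity)]
        gcongr
        simpa using norm_sum_le_of_le Finset.univ fun i _ => hv i
    _ ≤ B := by
        rw [← mul_assoc]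
        exact mul_le_of_le_one_left hB (inv_mul_le_one_of_le₀ le_rfl (Nat.cast_nonneg n))

theorem stmt_7_general {p : ℕ} {Z : Type*}
    (Θ : Set (EuclideanSpace ℝ (Fin p)))
    (δ : ℝ) (hδ0 : 0 < δ) (hδ1 : δ < 1)
    (f ft : Z → EuclideanSpace ℝ (Fin p) → ℝ)
    (hfd : ∀ z, Differentiable ℝ (f z)) (hftd : ∀ z, Differentiable ℝ (ft z))
    (hf : ∀ z, ∀ θ ∈ Θ, δ ≤ f z θ) (hft : ∀ z, ∀ θ ∈ Θ, δ ≤ ft z θ)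
    (hMbdd : BddAbove {x : ℝ | ∃ z, ∃ θ ∈ Θ, x = ‖gradient (f z) θ‖})
    (hbdd0 : BddAbove {x : ℝ | ∃ z, ∃ θ ∈ Θ, x = |ft z θ - f z θ|})
    (hbdd1 : BddAbove {x : ℝ | ∃ z, ∃ θ ∈ Θ, x = ‖gradient (ft z) θ - gradient (f z) θ‖})
    (n : ℕ) (zi : Fin n → Z) :
    sSup ((fun θ => ‖(n : ℝ)⁻¹ • ∑ i, gradient (fun θ' => Real.log (ft (zi i) θ')) θ -
        (n : ℝ)⁻¹ • ∑ i, gradient (fun θ' => Real.log (f (zi i) θ')) θ‖) '' Θ) ≤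
      ((1 + sSup {x : ℝ | ∃ z, ∃ θ ∈ Θ, x = ‖gradient (f z) θ‖}) / δ ^ 2) *
        (sSup {x : ℝ | ∃ z, ∃ θ ∈ Θ, x = |ft z θ - f z θ|} +
          sSup {x : ℝ | ∃ z, ∃ θ ∈ Θ, x = ‖gradient (ft z) θ - gradient (f z) θ‖}) := by
  set M := sSup {x : ℝ | ∃ z, ∃ θ ∈ Θ, x = ‖gradient (f z) θ‖}
  set e₀ := sSup {x : ℝ | ∃ z, ∃ θ ∈ Θ, x = |ft z θ - f z θ|}
  set e₁ := sSup {x : ℝ | ∃ z, ∃ θ ∈ Θ, x = ‖gradient (ft z) θ - gradient (f z) θ‖}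
  have hM : 0 ≤ M := Real.sSup_nonneg (by rintro _ ⟨z, θ, -, rfl⟩; positivity)
  have he₀ : 0 ≤ e₀ := Real.sSup_nonneg (by rintro _ ⟨z, θ, -, rfl⟩; positivity)
  have he₁ : 0 ≤ e₁ := Real.sSup_nonneg (by rintro _ ⟨z, θ, -, rfl⟩; positivity)
  have hscore : ∀ z, ∀ θ ∈ Θ, ‖gradient (fun θ' => Real.log (ft z θ')) θ -
      gradient (fun θ' => Real.log (f z θ')) θ‖ ≤ (1 + M) / δ ^ 2 * (e₀ + e₁) := by
    intro z θ hθ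
    refine (norm_gradient_log_sub_gradient_log_le (hftd z θ) (hfd z θ) hδ0
      (hft z θ hθ) (hf z θ hθ)).trans ((add_le_add ?_ ?_).trans
        (inv_mul_add_div_sq_mul_le hδ0 hδ1.le hM he₀ he₁))
    · gcongr
      exact le_csSup hbdd1 ⟨z, θ, hθ, rfl⟩
    · gcongr
      · exact le_csSup hbdd0 ⟨z, θ, hθ, rfl⟩
      · exact le_csSup hMbdd ⟨z, θ, hθ, rfl⟩
  refine Real.sSup_le ?_ (by positivity)
  rintro _ ⟨θ, hθ, rfl⟩
  dsimp only
  rw [← smul_sub, ← Finset.sum_sub_distrib]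
  exact norm_inv_natCast_smul_sum_le (by positivity) fun i => hscore (zi i) θ hθ

/-- The gradient (score) bound in the proof of Theorem 8 of the paper:
`sup_θ ‖(1/n)∑ ∇log f̃(z_i,θ) - (1/n)∑ ∇log f(z_i,θ)‖
  ≤ C₁(f) (sup_{z,θ}|f̃-f| + sup_{z,θ}‖∇f̃-∇f‖)` with `C₁(f) = (1+M)/δ²`,
`M = sup_{z,θ}‖∇_θ f(z,θ)‖`. -/
theorem stmt_7 {p : ℕ} {Z : Type*} [Nonempty Z]
    (Θ : Set (EuclideanSpace ℝ (Fin p))) (hΘ : Θ.Nonempty)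
    (δ : ℝ) (hδ0 : 0 < δ) (hδ1 : δ < 1)
    (f ft : Z → EuclideanSpace ℝ (Fin p) → ℝ)
    (hfd : ∀ z, Differentiable ℝ (f z)) (hftd : ∀ z, Differentiable ℝ (ft z))
    (hf : ∀ z, ∀ θ ∈ Θ, δ ≤ f z θ) (hft : ∀ z, ∀ θ ∈ Θ, δ ≤ ft z θ)
    (hMbdd : BddAbove {x : ℝ | ∃ z, ∃ θ ∈ Θ, x = ‖gradient (f z) θ‖})
    (hbdd0 : BddAbove {x : ℝ | ∃ z, ∃ θ ∈ Θ, x = |ft z θ - f z θ|})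
    (hbdd1 : BddAbove {x : ℝ | ∃ z, ∃ θ ∈ Θ, x = ‖gradient (ft z) θ - gradient (f z) θ‖})
    (n : ℕ) (hn : 1 ≤ n) (zi : Fin n → Z) :
    sSup ((fun θ => ‖(n : ℝ)⁻¹ • ∑ i, gradient (fun θ' => Real.log (ft (zi i) θ')) θ -
        (n : ℝ)⁻¹ • ∑ i, gradient (fun θ' => Real.log (f (zi i) θ')) θ‖) '' Θ) ≤
      ((1 + sSup {x : ℝ | ∃ z, ∃ θ ∈ Θ, x = ‖gradient (f z) θ‖}) / δ ^ 2) *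
        (sSup {x : ℝ | ∃ z, ∃ θ ∈ Θ, x = |ft z θ - f z θ|} +
          sSup {x : ℝ | ∃ z, ∃ θ ∈ Θ, x = ‖gradient (ft z) θ - gradient (f z) θ‖}) :=
  stmt_7_general Θ δ hδ0 hδ1 f ft hfd hftd hf hft hMbdd hbdd0 hbdd1 n zi
end

section
/- Let Θ ⊆ ℝ^p and Z be nonempty sets, let δ ∈ (0,1), and let f, f̃ : Z × ℝ^p → ℝ be such that for each z ∈ Z the maps θ ↦ f(z,θ) and θ ↦ f̃(z,θ) are twice differentiable, with f(z,θ) ≥ δ and f̃(z,θ) ≥ δ for all z ∈ Z, θ ∈ Θ, and with M₁ := sup_{z,θ} ‖∇_θ f(z,θ)‖ < ∞ and M₂ := sup_{z,θ} ‖∇_{θθ} f(z,θ)‖ < ∞ (suprema over z ∈ Z, θ ∈ Θ). Set C₂(f) := 4(1 + M₁² + M₂)/δ³. Then for every n ≥ 1 and every z₁, …, z_n ∈ Z, sup_{θ∈Θ} ‖(1/n) Σ_{i=1}^n ∇_{θθ} log f̃(z_i,θ) − (1/n) Σ_{i=1}^n ∇_{θθ} log f(z_i,θ)‖ ≤ C₂(f)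 · ( sup_{z,θ}|f̃ − f| + sup_{z,θ}‖∇_θ f̃ − ∇_θ f‖ + (sup_{z,θ}‖∇_θ f̃ − ∇_θ f‖)² + sup_{z,θ}‖∇_{θθ} f̃ − ∇_{θθ} f‖ ), provided the suprema on the right-hand side are finite. -/
/-!
Where `g > 0` is twice differentiable, `∇² log g = g⁻¹ ∇²g - g⁻² ∇g ∇gᵀ`. The difference of two
such expressions splits into four terms, `b⁻¹ (B - A)`, `(b⁻¹ - a⁻¹) A`,
`b⁻² (v vᵀ - u uᵀ)` and `(b⁻² - a⁻²) u uᵀ`; with `a, b ≥ δ` they are bounded by `ε₂/δ`,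
`ε₀ M₂/δ²`, `ε₁(2M₁ + ε₁)/δ²` and `2ε₀ M₁²/δ³`, and since `δ ≤ 1` everything fits under
`4(1 + M₁² + M₂)/δ³ · (ε₀ + ε₁ + ε₁² + ε₂)`. An average of differences obeys every bound
its summands obey.
-/

open Topology ContinuousLinearMap

section LogHessian

variable {E : Type*} [NormedAddCommGroup E] [NormedSpace ℝ E]

noncomputable def logHessian (a : ℝ) (u : E →L[ℝ] ℝ) (A : E →L[ℝ] E →L[ℝ] ℝ) :
    E →L[ℝ] E →L[ℝ] ℝ :=
  a⁻¹ • A - (a ^ 2)⁻¹ • u.smulRight u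

theorem fderiv_fderiv_log {g : E → ℝ} {θ : E} (hg : ∀ᶠ x in 𝓝 θ, DifferentiableAt ℝ g x)
    (hg₂ : DifferentiableAt ℝ (fderiv ℝ g) θ) (hθ : g θ ≠ 0) :
    fderiv ℝ (fderiv ℝ fun x => Real.log (g x)) θ =
      logHessian (g θ) (fderiv ℝ g θ) (fderiv ℝ (fderiv ℝ g) θ) := by
  have hg₀ : DifferentiableAt ℝ g θ := hg.self_of_nhds
  have hfderiv : fderiv ℝ (fun x => Real.log (g x)) =ᶠ[𝓝 θ] fun x => (g x)⁻¹ • fderiv ℝ g x := by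
    filter_upwards [hg, hg₀.continuousAt.eventually_ne hθ] with x hx hx₀
    exact fderiv.log hx hx₀
  have hinv := (hasDerivAt_inv hθ).comp_hasFDerivAt θ hg₀.hasFDerivAt
  refine ((hinv.smul hg₂.hasFDerivAt).congr_of_eventuallyEq hfderiv).fderiv.trans ?_
  ext v w
  simp [logHessian]
  ring

theorem norm_smulRight_self_sub_le (u v : E →L[ℝ] ℝ) :
    ‖v.smulRight v - u.smulRight u‖ ≤ ‖v - u‖ * (2 * ‖u‖ + ‖v - u‖) := by
  have hsplit : v.smulRight v - u.smulRight u = (v - u).smulRight v + u.smulRight (v - u) := by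
    ext x y
    simp
    ring
  have hv : ‖v‖ ≤ ‖u‖ + ‖v - u‖ := by linarith [norm_sub_norm_le v u]
  calc ‖v.smulRight v - u.smulRight u‖
      ≤ ‖v - u‖ * ‖v‖ + ‖u‖ * ‖v - u‖ := by
        rw [hsplit, ← norm_smulRight_apply, ← norm_smulRight_apply]
        exact norm_add_le ((v - u).smulRight v) (u.smulRight (v - u))
    _ ≤ ‖v - u‖ * (‖u‖ + ‖v - u‖) + ‖u‖ * ‖v - u‖ := by gcongr
    _ = ‖v - u‖ * (2 * ‖u‖ + ‖v - u‖) := by ring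

theorem abs_inv_sub_inv_le {a b δ : ℝ} (hδ : 0 < δ) (ha : δ ≤ a) (hb : δ ≤ b) :
    |b⁻¹ - a⁻¹| ≤ |b - a| / δ ^ 2 := by
  have ha₀ : 0 < a := hδ.trans_le ha
  have hb₀ : 0 < b := hδ.trans_le hb
  rw [inv_sub_inv hb₀.ne' ha₀.ne', abs_div, abs_sub_comm, abs_of_pos (mul_pos hb₀ ha₀)]
  gcongr
  nlinarith

theorem abs_inv_sq_sub_inv_sq_le {a b δ : ℝ} (hδ : 0 < δ) (ha : δ ≤ a) (hb : δ ≤ b) :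
    |(b ^ 2)⁻¹ - (a ^ 2)⁻¹| ≤ 2 * |b - a| / δ ^ 3 := by
  have ha₀ : 0 < a := hδ.trans_le ha
  have hb₀ : 0 < b := hδ.trans_le hb
  have hsum : |b⁻¹ + a⁻¹| ≤ 2 / δ := by
    rw [abs_of_pos (by positivity), div_eq_mul_inv]
    linarith [inv_anti₀ hδ ha, inv_anti₀ hδ hb]
  calc |(b ^ 2)⁻¹ - (a ^ 2)⁻¹| = |b⁻¹ - a⁻¹| * |b⁻¹ + a⁻¹| := by
        rw [← abs_mul]; congr 1; ring
    _ ≤ |b - a| / δ ^ 2 * (2 / δ) := by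
        gcongr
        exact abs_inv_sub_inv_le hδ ha hb
    _ = 2 * |b - a| / δ ^ 3 := by field_simp

theorem norm_logHessian_sub_le {a b δ M₁ M₂ ε₀ ε₁ ε₂ : ℝ} {u v : E →L[ℝ] ℝ}
    {A B : E →L[ℝ] E →L[ℝ] ℝ} (hδ : 0 < δ) (ha : δ ≤ a) (hb : δ ≤ b)
    (hu : ‖u‖ ≤ M₁) (hA : ‖A‖ ≤ M₂) (h₀ : |b - a| ≤ ε₀) (h₁ : ‖v - u‖ ≤ ε₁) (h₂ : ‖B - A‖ ≤ ε₂) :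
    ‖logHessian b v B - logHessian a u A‖ ≤
      ε₂ / δ + ε₀ / δ ^ 2 * M₂ + (δ ^ 2)⁻¹ * (ε₁ * (2 * M₁ + ε₁)) + 2 * ε₀ / δ ^ 3 * M₁ ^ 2 := by
  have hb₀ : 0 < b := hδ.trans_le hb
  have hε₀ : 0 ≤ ε₀ := (abs_nonneg _).trans h₀
  have hsplit : logHessian b v B - logHessian a u A =
      b⁻¹ • (B - A) + (b⁻¹ - a⁻¹) • A - (b ^ 2)⁻¹ • (v.smulRight v - u.smulRight u) -
        ((b ^ 2)⁻¹ - (a ^ 2)⁻¹) • u.smulRight u := by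
    simp only [logHessian]
    module
  have t₁ : ‖b⁻¹ • (B - A)‖ ≤ ε₂ / δ := by
    refine (opNorm_smul_le _ _).trans ?_
    rw [Real.norm_of_nonneg (by positivity), ← div_eq_inv_mul]
    exact div_le_div₀ ((norm_nonneg (B - A)).trans h₂) h₂ hδ hb
  have t₂ : ‖(b⁻¹ - a⁻¹) • A‖ ≤ ε₀ / δ ^ 2 * M₂ := by
    refine (opNorm_smul_le _ _).trans ?_
    rw [Real.norm_eq_abs]
    have hM₂ : 0 ≤ M₂ := (norm_nonneg A).trans hA
    gcongr
    exact (abs_inv_sub_inv_le hδ ha hb).trans (by gcongr)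
  have t₃ : ‖(b ^ 2)⁻¹ • (v.smulRight v - u.smulRight u)‖ ≤ (δ ^ 2)⁻¹ * (ε₁ * (2 * M₁ + ε₁)) := by
    refine (opNorm_smul_le _ _).trans ?_
    rw [Real.norm_of_nonneg (by positivity)]
    have hε₁ : 0 ≤ ε₁ := (norm_nonneg _).trans h₁
    have hM₁ : 0 ≤ M₁ := (norm_nonneg _).trans hu
    gcongr
    refine (norm_smulRight_self_sub_le u v).trans ?_
    gcongr
  have t₄ : ‖((b ^ 2)⁻¹ - (a ^ 2)⁻¹) • u.smulRight u‖ ≤ 2 * ε₀ / δ ^ 3 * M₁ ^ 2 := by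
    refine (opNorm_smul_le _ _).trans ?_
    rw [Real.norm_eq_abs, norm_smulRight_apply, ← sq]
    have hM₁ : 0 ≤ M₁ := (norm_nonneg u).trans hu
    gcongr
    exact (abs_inv_sq_sub_inv_sq_le hδ ha hb).trans (by gcongr)
  rw [hsplit]
  exact norm_sub_le_of_le (E := E →L[ℝ] E →L[ℝ] ℝ)
    (norm_sub_le_of_le (E := E →L[ℝ] E →L[ℝ] ℝ)
      (norm_add_le_of_le (E := E →L[ℝ] E →L[ℝ] ℝ) t₁ t₂) t₃) t₄

theorem norm_logHessian_sub_le_of_le_one {a b δ M₁ M₂ ε₀ ε₁ ε₂ : ℝ} {u v : E →L[ℝ] ℝ}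
    {A B : E →L[ℝ] E →L[ℝ] ℝ} (hδ : 0 < δ) (hδ₁ : δ ≤ 1) (ha : δ ≤ a) (hb : δ ≤ b)
    (hu : ‖u‖ ≤ M₁) (hA : ‖A‖ ≤ M₂) (h₀ : |b - a| ≤ ε₀) (h₁ : ‖v - u‖ ≤ ε₁) (h₂ : ‖B - A‖ ≤ ε₂) :
    ‖logHessian b v B - logHessian a u A‖ ≤
      4 * (1 + M₁ ^ 2 + M₂) / δ ^ 3 * (ε₀ + ε₁ + ε₁ ^ 2 + ε₂) := by
  have hM₁ : 0 ≤ M₁ := (norm_nonneg u).trans hu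
  have hM₂ : 0 ≤ M₂ := (norm_nonneg A).trans hA
  have hε₀ : 0 ≤ ε₀ := (abs_nonneg _).trans h₀
  have hε₁ : 0 ≤ ε₁ := (norm_nonneg _).trans h₁
  have hε₂ : 0 ≤ ε₂ := (norm_nonneg (B - A)).trans h₂
  have hδ₃ : δ ^ 3 ≤ δ := by nlinarith [pow_le_one₀ hδ.le hδ₁ (n := 2)]
  have hδ₃' : δ ^ 3 ≤ δ ^ 2 := pow_le_pow_of_le_one hδ.le hδ₁ (by norm_num)
  have hnum : ε₂ + ε₀ * M₂ + ε₁ * (2 * M₁ + ε₁) + 2 * ε₀ * M₁ ^ 2 ≤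
      4 * (1 + M₁ ^ 2 + M₂) * (ε₀ + ε₁ + ε₁ ^ 2 + ε₂) := by
    nlinarith [mul_nonneg hε₁ (sq_nonneg (M₁ - 1)), mul_nonneg hε₀ hM₂, mul_nonneg hε₂ hM₂,
      mul_nonneg hε₀ (sq_nonneg M₁), mul_nonneg hε₂ (sq_nonneg M₁), mul_nonneg hε₁ hM₂,
      mul_nonneg (sq_nonneg ε₁) hM₂, mul_nonneg (sq_nonneg ε₁) (sq_nonneg M₁)]
  calc ‖logHessian b v B - logHessian a u A‖
      ≤ ε₂ / δ + ε₀ / δ ^ 2 * M₂ + (δ ^ 2)⁻¹ * (ε₁ * (2 * M₁ + ε₁)) + 2 * ε₀ / δ ^ 3 * M₁ ^ 2 :=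
        norm_logHessian_sub_le hδ ha hb hu hA h₀ h₁ h₂
    _ ≤ ε₂ / δ ^ 3 + ε₀ / δ ^ 3 * M₂ + (δ ^ 3)⁻¹ * (ε₁ * (2 * M₁ + ε₁)) +
        2 * ε₀ / δ ^ 3 * M₁ ^ 2 := by gcongr
    _ = (ε₂ + ε₀ * M₂ + ε₁ * (2 * M₁ + ε₁) + 2 * ε₀ * M₁ ^ 2) / δ ^ 3 := by ring
    _ ≤ 4 * (1 + M₁ ^ 2 + M₂) / δ ^ 3 * (ε₀ + ε₁ + ε₁ ^ 2 + ε₂) := by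
        rw [div_mul_eq_mul_div]
        gcongr

end LogHessian

theorem norm_inv_smul_sum_sub_inv_smul_sum_le {F : Type*} [SeminormedAddCommGroup F]
    [NormedSpace ℝ F] {n : ℕ} (x y : Fin n → F) {K : ℝ} (hK : 0 ≤ K) (h : ∀ i, ‖x i - y i‖ ≤ K) :
    ‖(n : ℝ)⁻¹ • ∑ i, x i - (n : ℝ)⁻¹ • ∑ i, y i‖ ≤ K := by
  rcases n.eq_zero_or_pos with rfl | hn
  · simpa using hK
  rw [← smul_sub, ← Finset.sum_sub_distrib]
  refine (norm_smul_le _ _).trans ?_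
  rw [Real.norm_of_nonneg (by positivity), inv_mul_le_iff₀ (by positivity)]
  simpa using norm_sum_le_of_le Finset.univ fun i _ => h i

theorem norm_fderiv_eq_norm_gradient {F : Type*} [NormedAddCommGroup F] [InnerProductSpace ℝ F]
    [CompleteSpace F] (g : F → ℝ) (x : F) : ‖fderiv ℝ g x‖ = ‖gradient g x‖ := by
  rw [← toDual_gradient, LinearIsometryEquiv.norm_map]

theorem norm_fderiv_sub_fderiv_eq_norm_gradient_sub {F : Type*} [NormedAddCommGroup F]
    [InnerProductSpace ℝ F] [CompleteSpace F] (g h : F → ℝ) (x : F) :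
    ‖fderiv ℝ g x - fderiv ℝ h x‖ = ‖gradient g x - gradient h x‖ := by
  rw [← toDual_gradient, ← toDual_gradient, ← map_sub, LinearIsometryEquiv.norm_map]

theorem stmt_8_general {p : ℕ} {Z : Type*}
    (Θ : Set (EuclideanSpace ℝ (Fin p)))
    (δ : ℝ) (hδ0 : 0 < δ) (hδ1 : δ < 1)
    (f ft : Z → EuclideanSpace ℝ (Fin p) → ℝ)
    (hfd : ∀ z, Differentiable ℝ (f z)) (hfd2 : ∀ z, Differentiable ℝ (fderiv ℝ (f z)))
    (hftd : ∀ z, Differentiable ℝ (ft z)) (hftd2 : ∀ z, Differentiable ℝ (fderiv ℝ (ft z)))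
    (hf : ∀ z, ∀ θ ∈ Θ, δ ≤ f z θ) (hft : ∀ z, ∀ θ ∈ Θ, δ ≤ ft z θ)
    (hM1 : BddAbove {x : ℝ | ∃ z, ∃ θ ∈ Θ, x = ‖gradient (f z) θ‖})
    (hM2 : BddAbove {x : ℝ | ∃ z, ∃ θ ∈ Θ, x = ‖fderiv ℝ (fderiv ℝ (f z)) θ‖})
    (hbdd0 : BddAbove {x : ℝ | ∃ z, ∃ θ ∈ Θ, x = |ft z θ - f z θ|})
    (hbdd1 : BddAbove {x : ℝ | ∃ z, ∃ θ ∈ Θ, x = ‖gradient (ft z) θ - gradient (f z) θ‖})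
    (hbdd2 : BddAbove {x : ℝ | ∃ z, ∃ θ ∈ Θ,
      x = ‖fderiv ℝ (fderiv ℝ (ft z)) θ - fderiv ℝ (fderiv ℝ (f z)) θ‖})
    (n : ℕ) (zi : Fin n → Z) :
    sSup ((fun θ =>
        ‖(n : ℝ)⁻¹ • ∑ i, fderiv ℝ (fderiv ℝ (fun θ' => Real.log (ft (zi i) θ'))) θ -
          (n : ℝ)⁻¹ • ∑ i, fderiv ℝ (fderiv ℝ (fun θ' => Real.log (f (zi i) θ'))) θ‖) '' Θ) ≤
      (4 * (1 + sSup {x : ℝ | ∃ z, ∃ θ ∈ Θ, x = ‖gradient (f z) θ‖} ^ 2 +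
          sSup {x : ℝ | ∃ z, ∃ θ ∈ Θ, x = ‖fderiv ℝ (fderiv ℝ (f z)) θ‖}) / δ ^ 3) *
        (sSup {x : ℝ | ∃ z, ∃ θ ∈ Θ, x = |ft z θ - f z θ|} +
          sSup {x : ℝ | ∃ z, ∃ θ ∈ Θ, x = ‖gradient (ft z) θ - gradient (f z) θ‖} +
          sSup {x : ℝ | ∃ z, ∃ θ ∈ Θ, x = ‖gradient (ft z) θ - gradient (f z) θ‖} ^ 2 +
          sSup {x : ℝ | ∃ z, ∃ θ ∈ Θ,
            x = ‖fderiv ℝ (fderiv ℝ (ft z)) θ - fderiv ℝ (fderiv ℝ (f z)) θ‖}) := by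
  -- Nonnegativity of the bound is needed on its own for `n = 0` and `Θ = ∅`,
  -- where the left-hand side is the junk value `0`.
  refine Real.sSup_le ?_ ?nonneg
  · rintro _ ⟨θ, hθ, rfl⟩
    refine norm_inv_smul_sum_sub_inv_smul_sum_le
      (F := EuclideanSpace ℝ (Fin p) →L[ℝ] EuclideanSpace ℝ (Fin p) →L[ℝ] ℝ) _ _ ?nonneg fun i => ?_
    have hfi := hf (zi i) θ hθ
    have hfti := hft (zi i) θ hθ
    rw [fderiv_fderiv_log (.of_forall (hftd (zi i))) (hftd2 (zi i) θ) (hδ0.trans_le hfti).ne',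
      fderiv_fderiv_log (.of_forall (hfd (zi i))) (hfd2 (zi i) θ) (hδ0.trans_le hfi).ne']
    refine norm_logHessian_sub_le_of_le_one hδ0 hδ1.le hfi hfti ?_ (le_csSup hM2 ⟨_, θ, hθ, rfl⟩)
      (le_csSup hbdd0 ⟨_, θ, hθ, rfl⟩) ?_ (le_csSup hbdd2 ⟨_, θ, hθ, rfl⟩)
    · exact (norm_fderiv_eq_norm_gradient _ θ).trans_le (le_csSup hM1 ⟨_, θ, hθ, rfl⟩)
    · exact (norm_fderiv_sub_fderiv_eq_norm_gradient_sub _ _ θ).trans_le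
        (le_csSup hbdd1 ⟨_, θ, hθ, rfl⟩)
  case nonneg =>
    refine mul_nonneg (div_nonneg (mul_nonneg zero_le_four (add_nonneg (by positivity)
      (Real.sSup_nonneg ?_))) (by positivity)) (add_nonneg (add_nonneg (add_nonneg
        (Real.sSup_nonneg ?_) (Real.sSup_nonneg ?_)) (by positivity)) (Real.sSup_nonneg ?_))
    all_goals rintro _ ⟨_, _, _, rfl⟩; positivity

/-- The Hessian bound in the proof of Theorem 8 of the paper, with
`C₂(f) = 4(1 + M₁² + M₂)/δ³`, `M₁ = sup_{z,θ}‖∇_θ f(z,θ)‖`,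
`M₂ = sup_{z,θ}‖∇_{θθ} f(z,θ)‖`. The Hessian is `fderiv ℝ (fderiv ℝ ·)` with its
operator norm; twice differentiability is differentiability of the function and of
its derivative. -/
theorem stmt_8 {p : ℕ} {Z : Type*} [Nonempty Z]
    (Θ : Set (EuclideanSpace ℝ (Fin p))) (hΘ : Θ.Nonempty)
    (δ : ℝ) (hδ0 : 0 < δ) (hδ1 : δ < 1)
    (f ft : Z → EuclideanSpace ℝ (Fin p) → ℝ)
    (hfd : ∀ z, Differentiable ℝ (f z)) (hfd2 : ∀ z, Differentiable ℝ (fderiv ℝ (f z)))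
    (hftd : ∀ z, Differentiable ℝ (ft z)) (hftd2 : ∀ z, Differentiable ℝ (fderiv ℝ (ft z)))
    (hf : ∀ z, ∀ θ ∈ Θ, δ ≤ f z θ) (hft : ∀ z, ∀ θ ∈ Θ, δ ≤ ft z θ)
    (hM1 : BddAbove {x : ℝ | ∃ z, ∃ θ ∈ Θ, x = ‖gradient (f z) θ‖})
    (hM2 : BddAbove {x : ℝ | ∃ z, ∃ θ ∈ Θ, x = ‖fderiv ℝ (fderiv ℝ (f z)) θ‖})
    (hbdd0 : BddAbove {x : ℝ | ∃ z, ∃ θ ∈ Θ, x = |ft z θ - f z θ|})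
    (hbdd1 : BddAbove {x : ℝ | ∃ z, ∃ θ ∈ Θ, x = ‖gradient (ft z) θ - gradient (f z) θ‖})
    (hbdd2 : BddAbove {x : ℝ | ∃ z, ∃ θ ∈ Θ,
      x = ‖fderiv ℝ (fderiv ℝ (ft z)) θ - fderiv ℝ (fderiv ℝ (f z)) θ‖})
    (n : ℕ) (hn : 1 ≤ n) (zi : Fin n → Z) :
    sSup ((fun θ =>
        ‖(n : ℝ)⁻¹ • ∑ i, fderiv ℝ (fderiv ℝ (fun θ' => Real.log (ft (zi i) θ'))) θ -
          (n : ℝ)⁻¹ • ∑ i, fderiv ℝ (fderiv ℝ (fun θ' => Real.log (f (zi i) θ'))) θ‖) '' Θ) ≤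
      (4 * (1 + sSup {x : ℝ | ∃ z, ∃ θ ∈ Θ, x = ‖gradient (f z) θ‖} ^ 2 +
          sSup {x : ℝ | ∃ z, ∃ θ ∈ Θ, x = ‖fderiv ℝ (fderiv ℝ (f z)) θ‖}) / δ ^ 3) *
        (sSup {x : ℝ | ∃ z, ∃ θ ∈ Θ, x = |ft z θ - f z θ|} +
          sSup {x : ℝ | ∃ z, ∃ θ ∈ Θ, x = ‖gradient (ft z) θ - gradient (f z) θ‖} +
          sSup {x : ℝ | ∃ z, ∃ θ ∈ Θ, x = ‖gradient (ft z) θ - gradient (f z) θ‖} ^ 2 +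
          sSup {x : ℝ | ∃ z, ∃ θ ∈ Θ,
            x = ‖fderiv ℝ (fderiv ℝ (ft z)) θ - fderiv ℝ (fderiv ℝ (f z)) θ‖}) :=
  stmt_8_general Θ δ hδ0 hδ1 f ft hfd hfd2 hftd hftd2 hf hft hM1 hM2 hbdd0 hbdd1 hbdd2 n zi
end

section
/- Let Θ ⊆ ℝ^p be a nonempty set, let 0 < δ < D < ∞ and J = [δ, D], and let g, h : ℝ^p → ℝ be twice differentiable with g(θ), h(θ) ∈ J for all θ ∈ Θ and with sup_{θ∈Θ}‖∇g‖, sup_{θ∈Θ}‖∇h‖, sup_{θ∈Θ}‖∇²g‖, sup_{θ∈Θ}‖∇²h‖ all finite. Let ψ : ℝ → ℝ be three times differentiable with M₁ := sup_{x∈J}|ψ'(x)|, M₂ := sup_{x∈J}|ψ''(x)|, M₃ := sup_{x∈J}|ψ'''(x)| all finite. Then sup_{θ∈Θ} ‖∇²(ψ∘g)(θ) − ∇²(ψ∘h)(θ)‖ ≤ M₃ · (sup_Θ‖∇h‖)² · sup_Θ|g − h| + M₁ · sup_Θ‖∇²g − ∇²h‖ + M₂ · sup_Θ‖∇²h‖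 · sup_Θ|g − h| + 2 M₂ · sup_Θ‖∇h‖ · sup_Θ‖∇g − ∇h‖ + M₂ · (sup_Θ‖∇g − ∇h‖)², provided the suprema of |g − h|, ‖∇g − ∇h‖ and ‖∇²g − ∇²h‖ over Θ are finite. -/
/-!
By the chain rule `∇²(ψ ∘ g) = ψ'(g) ∇²g + ψ''(g) ∇g ⊗ ∇g`, so with `d = ∇g - ∇h`,
`∇²(ψ ∘ g) - ∇²(ψ ∘ h) = ψ'(g) (∇²g - ∇²h) + (ψ'(g) - ψ'(h)) ∇²h + (ψ''(g) - ψ''(h)) ∇h ⊗ ∇h`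
`  + ψ''(g) (d ⊗ ∇h + ∇h ⊗ d + d ⊗ d)`.
Since `g` and `h` take values in the interval `J`, the mean value theorem bounds
`|ψ⁽ᵏ⁾(g) - ψ⁽ᵏ⁾(h)|` by `Mₖ₊₁ |g - h|`, and every factor is then bounded by its supremum over `Θ`.
-/

open InnerProductSpace ContinuousLinearMap

section Gradient

variable {𝕜 F : Type*} [RCLike 𝕜] [NormedAddCommGroup F] [InnerProductSpace 𝕜 F] [CompleteSpace F]

theorem norm_gradient (f : F → 𝕜) (x : F) : ‖gradient f x‖ = ‖fderiv 𝕜 f x‖ := by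
  rw [← (toDual 𝕜 F).norm_map, toDual_gradient]

theorem norm_gradient_sub_gradient (f₁ f₂ : F → 𝕜) (x : F) :
    ‖gradient f₁ x - gradient f₂ x‖ = ‖fderiv 𝕜 f₁ x - fderiv 𝕜 f₂ x‖ := by
  rw [← (toDual 𝕜 F).norm_map, map_sub, toDual_gradient, toDual_gradient]

end Gradient

section ChainHessian

variable {𝕜 E : Type*} [NontriviallyNormedField 𝕜] [NormedAddCommGroup E] [NormedSpace 𝕜 E]

def chainHessian (a b : 𝕜) (L : E →L[𝕜] 𝕜) (H : E →L[𝕜] E →L[𝕜] 𝕜) : E →L[𝕜] E →L[𝕜] 𝕜 :=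
  a • H + b • L.smulRight L

theorem fderiv_comp_eq_deriv_smul {g : E → 𝕜} {ψ : 𝕜 → 𝕜} (hg : Differentiable 𝕜 g)
    (hψ : Differentiable 𝕜 ψ) :
    fderiv 𝕜 (fun x => ψ (g x)) = fun x => deriv ψ (g x) • fderiv 𝕜 g x :=
  funext fun x => ((hψ (g x)).hasDerivAt.comp_hasFDerivAt x (hg x).hasFDerivAt).fderiv

theorem fderiv_fderiv_comp_eq_chainHessian {g : E → 𝕜} {ψ : 𝕜 → 𝕜} (hg : Differentiable 𝕜 g)
    (hg' : Differentiable 𝕜 (fderiv 𝕜 g)) (hψ : Differentiable 𝕜 ψ)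
    (hψ' : Differentiable 𝕜 (deriv ψ)) (x : E) :
    fderiv 𝕜 (fderiv 𝕜 (fun x => ψ (g x))) x =
      chainHessian (deriv ψ (g x)) (deriv (deriv ψ) (g x)) (fderiv 𝕜 g x)
        (fderiv 𝕜 (fderiv 𝕜 g) x) := by
  have hψ'g : HasFDerivAt (fun x => deriv ψ (g x)) (deriv (deriv ψ) (g x) • fderiv 𝕜 g x) x :=
    (hψ' (g x)).hasDerivAt.comp_hasFDerivAt x (hg x).hasFDerivAt
  rw [fderiv_comp_eq_deriv_smul hg hψ, (hψ'g.fun_smul (hg' x).hasFDerivAt).fderiv, chainHessian]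
  ext v w
  simp only [add_apply, smul_apply, smulRight_apply, smul_eq_mul, add_right_inj]
  ring

theorem norm_smulRight_self_sub_le_s12 (L L' : E →L[𝕜] 𝕜) :
    ‖L.smulRight L - L'.smulRight L'‖ ≤ 2 * ‖L'‖ * ‖L - L'‖ + ‖L - L'‖ ^ 2 := by
  set d := L - L'
  have hL : L = L' + d := by simp [d]
  have hdecomp :
      L.smulRight L - L'.smulRight L' = d.smulRight L' + L'.smulRight d + d.smulRight d := by
    rw [hL]
    ext v w
    simp only [sub_apply, smulRight_apply, add_apply, smul_add, smul_apply, smul_eq_mul]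
    ring
  rw [hdecomp]
  refine (norm_add₃_le (E := E →L[𝕜] E →L[𝕜] 𝕜)).trans ?_
  simp only [norm_smulRight_apply]
  linarith

theorem norm_chainHessian_sub_le (a a' b b' : 𝕜) (L L' : E →L[𝕜] 𝕜)
    (H H' : E →L[𝕜] E →L[𝕜] 𝕜) :
    ‖chainHessian a b L H - chainHessian a' b' L' H'‖ ≤
      ‖b - b'‖ * ‖L'‖ ^ 2 + ‖a‖ * ‖H - H'‖ + ‖a - a'‖ * ‖H'‖ +
        ‖b‖ * (2 * ‖L'‖ * ‖L - L'‖ + ‖L - L'‖ ^ 2) := by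
  have hdecomp : chainHessian a b L H - chainHessian a' b' L' H' =
      (b - b') • L'.smulRight L' + a • (H - H') + (a - a') • H' +
        b • (L.smulRight L - L'.smulRight L') := by
    ext v w
    simp only [chainHessian, sub_apply, add_apply, smul_apply, smulRight_apply, smul_eq_mul]
    ring
  rw [hdecomp]
  refine (norm_add₄_le (E := E →L[𝕜] E →L[𝕜] 𝕜)).trans ?_
  gcongr ?_ + ?_ + ?_ + ?_ <;> refine (opNorm_smul_le _ _).trans ?_
  · rw [norm_smulRight_apply, sq]
  · rfl
  · rfl
  · gcongr; exact norm_smulRight_self_sub_le_s12 L L'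

end ChainHessian

theorem BddAbove.le_csSup_image {α β : Type*} [ConditionallyCompleteLattice β] {f : α → β}
    {s : Set α} (hf : BddAbove (f '' s)) {a : α} (ha : a ∈ s) : f a ≤ sSup (f '' s) :=
  le_csSup hf (Set.mem_image_of_mem f ha)

theorem Real.sSup_image_nonneg {α : Type*} {f : α → ℝ} (hf : ∀ x, 0 ≤ f x) (s : Set α) :
    0 ≤ sSup (f '' s) :=
  Real.sSup_nonneg (Set.forall_mem_image.2 fun x _ => hf x)

theorem norm_fderiv_fderiv_comp_sub_le {E : Type*} [NormedAddCommGroup E] [NormedSpace ℝ E]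
    {g h : E → ℝ} {ψ : ℝ → ℝ} {s : Set ℝ} {x : E} {M₁ M₂ M₃ G H ε₀ ε₁ ε₂ : ℝ}
    (hg : Differentiable ℝ g) (hg' : Differentiable ℝ (fderiv ℝ g))
    (hh : Differentiable ℝ h) (hh' : Differentiable ℝ (fderiv ℝ h))
    (hψ : Differentiable ℝ ψ) (hψ' : Differentiable ℝ (deriv ψ))
    (hψ'' : Differentiable ℝ (deriv (deriv ψ)))
    (hs : Convex ℝ s) (hgx : g x ∈ s) (hhx : h x ∈ s)
    (hM₁ : ∀ y ∈ s, |deriv ψ y| ≤ M₁) (hM₂ : ∀ y ∈ s, |deriv (deriv ψ) y| ≤ M₂)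
    (hM₃ : ∀ y ∈ s, |deriv (deriv (deriv ψ)) y| ≤ M₃)
    (hG : ‖fderiv ℝ h x‖ ≤ G) (hH : ‖fderiv ℝ (fderiv ℝ h) x‖ ≤ H)
    (hε₀ : |g x - h x| ≤ ε₀) (hε₁ : ‖fderiv ℝ g x - fderiv ℝ h x‖ ≤ ε₁)
    (hε₂ : ‖fderiv ℝ (fderiv ℝ g) x - fderiv ℝ (fderiv ℝ h) x‖ ≤ ε₂) :
    ‖fderiv ℝ (fderiv ℝ (fun x => ψ (g x))) x - fderiv ℝ (fderiv ℝ (fun x => ψ (h x))) x‖ ≤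
      M₃ * G ^ 2 * ε₀ + M₁ * ε₂ + M₂ * H * ε₀ + 2 * M₂ * G * ε₁ + M₂ * ε₁ ^ 2 := by
  have hM₁₀ : 0 ≤ M₁ := (abs_nonneg _).trans (hM₁ _ hgx)
  have hM₂₀ : 0 ≤ M₂ := (abs_nonneg _).trans (hM₂ _ hgx)
  have hM₃₀ : 0 ≤ M₃ := (abs_nonneg _).trans (hM₃ _ hgx)
  have hG₀ : 0 ≤ G := (norm_nonneg _).trans hG
  have hε₀₀ : 0 ≤ ε₀ := (abs_nonneg _).trans hε₀
  have hψ'_sub : |deriv ψ (g x) - deriv ψ (h x)| ≤ M₂ * ε₀ :=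
    (hs.norm_image_sub_le_of_norm_deriv_le (fun y _ => hψ' y) hM₂ hhx hgx).trans
      (mul_le_mul_of_nonneg_left hε₀ hM₂₀)
  have hψ''_sub : |deriv (deriv ψ) (g x) - deriv (deriv ψ) (h x)| ≤ M₃ * ε₀ :=
    (hs.norm_image_sub_le_of_norm_deriv_le (fun y _ => hψ'' y) hM₃ hhx hgx).trans
      (mul_le_mul_of_nonneg_left hε₀ hM₃₀)
  rw [fderiv_fderiv_comp_eq_chainHessian hg hg' hψ hψ',
    fderiv_fderiv_comp_eq_chainHessian hh hh' hψ hψ']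
  refine (norm_chainHessian_sub_le ..).trans ?_
  simp only [Real.norm_eq_abs]
  calc _ ≤ M₃ * ε₀ * G ^ 2 + M₁ * ε₂ + M₂ * ε₀ * H + M₂ * (2 * G * ε₁ + ε₁ ^ 2) := by
        gcongr
        · exact hM₁ _ hgx
        · exact hM₂ _ hgx
    _ = _ := by ring

theorem stmt_12_general {p : ℕ} (Θ : Set (EuclideanSpace ℝ (Fin p)))
    (δ D : ℝ)
    (g h : EuclideanSpace ℝ (Fin p) → ℝ)
    (hgd : Differentiable ℝ g) (hgd2 : Differentiable ℝ (fderiv ℝ g))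
    (hhd : Differentiable ℝ h) (hhd2 : Differentiable ℝ (fderiv ℝ h))
    (hgmem : ∀ θ ∈ Θ, g θ ∈ Set.Icc δ D) (hhmem : ∀ θ ∈ Θ, h θ ∈ Set.Icc δ D)
    (hbgh : BddAbove ((fun θ => ‖gradient h θ‖) '' Θ))
    (hbHh : BddAbove ((fun θ => ‖fderiv ℝ (fderiv ℝ h) θ‖) '' Θ))
    (ψ : ℝ → ℝ) (hψ1 : Differentiable ℝ ψ) (hψ2 : Differentiable ℝ (deriv ψ))
    (hψ3 : Differentiable ℝ (deriv (deriv ψ)))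
    (hM1 : BddAbove ((fun x => |deriv ψ x|) '' Set.Icc δ D))
    (hM2 : BddAbove ((fun x => |deriv (deriv ψ) x|) '' Set.Icc δ D))
    (hM3 : BddAbove ((fun x => |deriv (deriv (deriv ψ)) x|) '' Set.Icc δ D))
    (hb0 : BddAbove ((fun θ => |g θ - h θ|) '' Θ))
    (hb1 : BddAbove ((fun θ => ‖gradient g θ - gradient h θ‖) '' Θ))
    (hb2 : BddAbove ((fun θ => ‖fderiv ℝ (fderiv ℝ g) θ - fderiv ℝ (fderiv ℝ h) θ‖) '' Θ)) :
    sSup ((fun θ => ‖fderiv ℝ (fderiv ℝ (fun x => ψ (g x))) θ -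
        fderiv ℝ (fderiv ℝ (fun x => ψ (h x))) θ‖) '' Θ) ≤
      sSup ((fun x => |deriv (deriv (deriv ψ)) x|) '' Set.Icc δ D) *
          sSup ((fun θ => ‖gradient h θ‖) '' Θ) ^ 2 *
          sSup ((fun θ => |g θ - h θ|) '' Θ) +
        sSup ((fun x => |deriv ψ x|) '' Set.Icc δ D) *
          sSup ((fun θ => ‖fderiv ℝ (fderiv ℝ g) θ - fderiv ℝ (fderiv ℝ h) θ‖) '' Θ) +
        sSup ((fun x => |deriv (deriv ψ) x|) '' Set.Icc δ D) *
          sSup ((fun θ => ‖fderiv ℝ (fderiv ℝ h) θ‖) '' Θ) *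
          sSup ((fun θ => |g θ - h θ|) '' Θ) +
        2 * sSup ((fun x => |deriv (deriv ψ) x|) '' Set.Icc δ D) *
          sSup ((fun θ => ‖gradient h θ‖) '' Θ) *
          sSup ((fun θ => ‖gradient g θ - gradient h θ‖) '' Θ) +
        sSup ((fun x => |deriv (deriv ψ) x|) '' Set.Icc δ D) *
          sSup ((fun θ => ‖gradient g θ - gradient h θ‖) '' Θ) ^ 2 := by
  refine Real.sSup_le ?_ ?_
  · rintro _ ⟨θ, hθ, rfl⟩
    refine norm_fderiv_fderiv_comp_sub_le hgd hgd2 hhd hhd2 hψ1 hψ2 hψ3 (convex_Icc δ D)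
      (hgmem θ hθ) (hhmem θ hθ) (fun _ => hM1.le_csSup_image) (fun _ => hM2.le_csSup_image)
      (fun _ => hM3.le_csSup_image) ?_ (hbHh.le_csSup_image hθ) (hb0.le_csSup_image hθ) ?_
      (hb2.le_csSup_image hθ)
    · exact norm_gradient h θ ▸ hbgh.le_csSup_image hθ
    · exact norm_gradient_sub_gradient g h θ ▸ hb1.le_csSup_image hθ
  · have := Real.sSup_image_nonneg (fun x => abs_nonneg (deriv ψ x)) (Set.Icc δ D)
    have := Real.sSup_image_nonneg (fun x => abs_nonneg (deriv (deriv ψ) x)) (Set.Icc δ D)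
    have := Real.sSup_image_nonneg (fun x => abs_nonneg (deriv (deriv (deriv ψ)) x)) (Set.Icc δ D)
    have := Real.sSup_image_nonneg (fun θ => norm_nonneg (gradient h θ)) Θ
    have := Real.sSup_image_nonneg (fun θ => norm_nonneg (fderiv ℝ (fderiv ℝ h) θ)) Θ
    have := Real.sSup_image_nonneg (fun θ => abs_nonneg (g θ - h θ)) Θ
    have := Real.sSup_image_nonneg (fun θ => norm_nonneg (gradient g θ - gradient h θ)) Θ
    have := Real.sSup_image_nonneg
      (fun θ => norm_nonneg (fderiv ℝ (fderiv ℝ g) θ - fderiv ℝ (fderiv ℝ h) θ)) Θ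
    positivity

/-- Theorem 12(iii) of the paper (the `k = 2` composition bound for Hessians),
with `M_j = sup_{x∈J}|ψ^{(j)}|` on `J = [δ, D]`; the Hessian is `fderiv ℝ (fderiv ℝ ·)`
with its operator norm. -/
theorem stmt_12 {p : ℕ} (Θ : Set (EuclideanSpace ℝ (Fin p))) (hΘ : Θ.Nonempty)
    (δ D : ℝ) (hδ : 0 < δ) (hδD : δ < D)
    (g h : EuclideanSpace ℝ (Fin p) → ℝ)
    (hgd : Differentiable ℝ g) (hgd2 : Differentiable ℝ (fderiv ℝ g))
    (hhd : Differentiable ℝ h) (hhd2 : Differentiable ℝ (fderiv ℝ h))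
    (hgmem : ∀ θ ∈ Θ, g θ ∈ Set.Icc δ D) (hhmem : ∀ θ ∈ Θ, h θ ∈ Set.Icc δ D)
    (hbgg : BddAbove ((fun θ => ‖gradient g θ‖) '' Θ))
    (hbgh : BddAbove ((fun θ => ‖gradient h θ‖) '' Θ))
    (hbHg : BddAbove ((fun θ => ‖fderiv ℝ (fderiv ℝ g) θ‖) '' Θ))
    (hbHh : BddAbove ((fun θ => ‖fderiv ℝ (fderiv ℝ h) θ‖) '' Θ))
    (ψ : ℝ → ℝ) (hψ1 : Differentiable ℝ ψ) (hψ2 : Differentiable ℝ (deriv ψ))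
    (hψ3 : Differentiable ℝ (deriv (deriv ψ)))
    (hM1 : BddAbove ((fun x => |deriv ψ x|) '' Set.Icc δ D))
    (hM2 : BddAbove ((fun x => |deriv (deriv ψ) x|) '' Set.Icc δ D))
    (hM3 : BddAbove ((fun x => |deriv (deriv (deriv ψ)) x|) '' Set.Icc δ D))
    (hb0 : BddAbove ((fun θ => |g θ - h θ|) '' Θ))
    (hb1 : BddAbove ((fun θ => ‖gradient g θ - gradient h θ‖) '' Θ))
    (hb2 : BddAbove ((fun θ => ‖fderiv ℝ (fderiv ℝ g) θ - fderiv ℝ (fderiv ℝ h) θ‖) '' Θ)) :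
    sSup ((fun θ => ‖fderiv ℝ (fderiv ℝ (fun x => ψ (g x))) θ -
        fderiv ℝ (fderiv ℝ (fun x => ψ (h x))) θ‖) '' Θ) ≤
      sSup ((fun x => |deriv (deriv (deriv ψ)) x|) '' Set.Icc δ D) *
          sSup ((fun θ => ‖gradient h θ‖) '' Θ) ^ 2 *
          sSup ((fun θ => |g θ - h θ|) '' Θ) +
        sSup ((fun x => |deriv ψ x|) '' Set.Icc δ D) *
          sSup ((fun θ => ‖fderiv ℝ (fderiv ℝ g) θ - fderiv ℝ (fderiv ℝ h) θ‖) '' Θ) +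
        sSup ((fun x => |deriv (deriv ψ) x|) '' Set.Icc δ D) *
          sSup ((fun θ => ‖fderiv ℝ (fderiv ℝ h) θ‖) '' Θ) *
          sSup ((fun θ => |g θ - h θ|) '' Θ) +
        2 * sSup ((fun x => |deriv (deriv ψ) x|) '' Set.Icc δ D) *
          sSup ((fun θ => ‖gradient h θ‖) '' Θ) *
          sSup ((fun θ => ‖gradient g θ - gradient h θ‖) '' Θ) +
        sSup ((fun x => |deriv (deriv ψ) x|) '' Set.Icc δ D) *
          sSup ((fun θ => ‖gradient g θ - gradient h θ‖) '' Θ) ^ 2 :=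
  stmt_12_general Θ δ D g h hgd hgd2 hhd hhd2 hgmem hhmem hbgh hbHh ψ hψ1 hψ2 hψ3 hM1 hM2 hM3 hb0
    hb1 hb2
end

section
/- Let n ≥ 1 and define f : ℝⁿ × ℝⁿ → ℝ by f(θ, v) = 1/(1 + exp(−⟨θ, v⟩)), where ⟨θ, v⟩ = Σ_{i=1}^n θ_i v_i. Then f is infinitely differentiable, and for all multi-indices α, β ∈ ℕⁿ there exists c > 0 such that the mixed partial derivative of f obtained by differentiating α_i times with respect to θ_i and β_i times with respect to v_i (for each i = 1, …, n) satisfies |D_α^{(θ)} D_β^{(v)} f(θ, v)| ≤ c · ∏_{i=1}^n (1 + |v_i|)^{α_i} · ∏_{i=1}^n (1 + |θ_i|)^{β_i} for all θ, v ∈ ℝⁿ. -/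
/-- Partial derivative in the `i`-th coordinate of the first argument `θ`. -/
noncomputable def pdTheta {n : ℕ} (i : Fin n)
    (F : (Fin n → ℝ) × (Fin n → ℝ) → ℝ) : (Fin n → ℝ) × (Fin n → ℝ) → ℝ :=
  fun p => deriv (fun s => F (Function.update p.1 i s, p.2)) (p.1 i)

/-- Partial derivative in the `i`-th coordinate of the second argument `v`. -/
noncomputable def pdV {n : ℕ} (i : Fin n)
    (F : (Fin n → ℝ) × (Fin n → ℝ) → ℝ) : (Fin n → ℝ) × (Fin n → ℝ) → ℝ :=
  fun p => deriv (fun s => F (p.1, Function.update p.2 i s)) (p.2 i)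

/-- Multi-index iterated partial derivative `D_α^{(θ)}`: differentiate `α i` times
in the coordinate `θ i`, for each `i`. -/
noncomputable def multiPdTheta {n : ℕ} (α : Fin n → ℕ)
    (F : (Fin n → ℝ) × (Fin n → ℝ) → ℝ) : (Fin n → ℝ) × (Fin n → ℝ) → ℝ :=
  (List.finRange n).foldr (fun i G => (pdTheta i)^[α i] G) F

/-- Multi-index iterated partial derivative `D_β^{(v)}`: differentiate `β i` times
in the coordinate `v i`, for each `i`. -/
noncomputable def multiPdV {n : ℕ} (β : Fin n → ℕ)
    (F : (Fin n → ℝ) × (Fin n → ℝ) → ℝ) : (Fin n → ℝ) × (Fin n → ℝ) → ℝ :=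
  (List.finRange n).foldr (fun i G => (pdV i)^[β i] G) F

noncomputable section Aux19

/-- The logistic function. -/
def logis : ℝ → ℝ := fun x => (1 + Real.exp (-x))⁻¹

lemma logis_den_pos (x : ℝ) : 0 < 1 + Real.exp (-x) := by positivity

lemma logis_nonneg (x : ℝ) : 0 ≤ logis x := by
  unfold logis; positivity

lemma logis_le_one (x : ℝ) : logis x ≤ 1 := by
  unfold logis
  rw [inv_le_one_iff₀]
  right
  nlinarith [Real.exp_pos (-x)]

lemma hasDerivAt_logis (x : ℝ) : HasDerivAt logis (logis x - logis x ^ 2) x := by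
  have h1 : HasDerivAt (fun y : ℝ => 1 + Real.exp (-y)) (-Real.exp (-x)) x := by
    have := ((Real.hasDerivAt_exp (-x)).comp x ((hasDerivAt_id x).neg))
    simpa using this.const_add 1
  have h2 := h1.inv (ne_of_gt (logis_den_pos x))
  refine HasDerivAt.congr_deriv (f := logis) h2 ?_
  have hd := logis_den_pos x
  unfold logis
  field_simp
  ring

lemma contDiff_logis : ContDiff ℝ (⊤ : ℕ∞) logis := by
  have : ContDiff ℝ (⊤ : ℕ∞) (fun y : ℝ => 1 + Real.exp (-y)) :=
    contDiff_const.add (Real.contDiff_exp.comp contDiff_neg)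
  exact this.inv (fun x => ne_of_gt (logis_den_pos x))

variable {n : ℕ}

/-- A basic term: monomial in `v`, monomial in `θ`, times a polynomial in `logis ⟨θ,v⟩`. -/
def Tm (n : ℕ) (a b : Fin n → ℕ) (P : Polynomial ℝ) :
    (Fin n → ℝ) × (Fin n → ℝ) → ℝ :=
  fun p => (∏ i, p.2 i ^ a i) * (∏ i, p.1 i ^ b i) *
    P.eval (logis (∑ i, p.1 i * p.2 i))

/-- Finite sums of basic terms with exponent bounds. -/
inductive Rep19 (n : ℕ) (α β : Fin n → ℕ) : ((Fin n → ℝ) × (Fin n → ℝ) → ℝ) → Prop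
  | term (a b : Fin n → ℕ) (P : Polynomial ℝ) (ha : ∀ i, a i ≤ α i)
      (hb : ∀ i, b i ≤ β i) : Rep19 n α β (Tm n a b P)
  | add {F G} : Rep19 n α β F → Rep19 n α β G → Rep19 n α β (fun p => F p + G p)

lemma Rep19.mono {α β α' β' : Fin n → ℕ} {F} (h : Rep19 n α β F) (hα : ∀ i, α i ≤ α' i)
    (hβ : ∀ i, β i ≤ β' i) : Rep19 n α' β' F := by
  induction h with
  | term a b P ha hb =>
      exact Rep19.term a b P (fun i => (ha i).trans (hα i)) (fun i => (hb i).trans (hβ i))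
  | add h1 h2 ih1 ih2 => exact Rep19.add ih1 ih2

lemma Rep19.swap {α β : Fin n → ℕ} {F} (h : Rep19 n α β F) :
    Rep19 n β α (fun p => F (p.2, p.1)) := by
  induction h with
  | term a b P ha hb =>
      have : (fun p : (Fin n → ℝ) × (Fin n → ℝ) => Tm n a b P (p.2, p.1)) = Tm n b a P := by
        funext p
        simp only [Tm]
        rw [Finset.sum_congr rfl (fun i _ => mul_comm (p.2 i) (p.1 i))]
        ring
      rw [this]
      exact Rep19.term b a P hb ha
  | add h1 h2 ih1 ih2 => exact Rep19.add ih1 ih2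

lemma prodUpd (x : Fin n → ℝ) (e : Fin n → ℕ) (i : Fin n) (s : ℝ) (m : ℕ) :
    ∏ k, Function.update x i s k ^ Function.update e i m k
      = s ^ m * ∏ k ∈ Finset.univ.erase i, x k ^ e k := by
  classical
  have hf : (fun k => Function.update x i s k ^ Function.update e i m k)
      = Function.update (fun k => x k ^ e k) i (s ^ m) := by
    funext k
    rcases eq_or_ne k i with rfl | hk
    · simp
    · simp [Function.update_of_ne hk]
  rw [Finset.prod_congr rfl (fun k _ => congrFun hf k),
    Finset.prod_update_of_mem (Finset.mem_univ i)]
  congr 1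
  apply Finset.prod_congr _ (fun _ _ => rfl)
  ext j
  simp [Finset.mem_erase, and_comm]

lemma sumUpd (x y : Fin n → ℝ) (i : Fin n) (s : ℝ) :
    ∑ k, Function.update x i s k * y k
      = s * y i + ∑ k ∈ Finset.univ.erase i, x k * y k := by
  classical
  have hf : (fun k => Function.update x i s k * y k)
      = Function.update (fun k => x k * y k) i (s * y i) := by
    funext k
    rcases eq_or_ne k i with rfl | hk
    · simp
    · simp [Function.update_of_ne hk]
  rw [Finset.sum_congr rfl (fun k _ => congrFun hf k),
    Finset.sum_update_of_mem (Finset.mem_univ i)]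
  congr 1
  apply Finset.sum_congr _ (fun _ _ => rfl)
  ext j
  simp [Finset.mem_erase, and_comm]

/-- The key computation: derivative of a basic term in the coordinate `θ i`. -/
lemma hasDerivAt_Tm (a b : Fin n → ℕ) (P : Polynomial ℝ) (i : Fin n)
    (θ v : Fin n → ℝ) :
    HasDerivAt (fun s => Tm n a b P (Function.update θ i s, v))
      (Tm n a (Function.update b i (b i - 1)) ((b i : ℝ) • P) (θ, v) +
       Tm n (Function.update a i (a i + 1)) b
         (P.derivative * (Polynomial.X - Polynomial.X ^ 2)) (θ, v)) (θ i) := by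
  classical
  set c₁ : ℝ := ∏ k ∈ Finset.univ.erase i, θ k ^ b k with hc₁
  set c₂ : ℝ := ∑ k ∈ Finset.univ.erase i, θ k * v k with hc₂
  set Cv : ℝ := ∏ k, v k ^ a k with hCv
  have hprod : ∀ s : ℝ, (∏ k, (Function.update θ i s) k ^ b k) = s ^ b i * c₁ := by
    intro s
    have := prodUpd θ b i s (b i)
    rwa [Function.update_eq_self] at this
  have hsum : ∀ s : ℝ, (∑ k, (Function.update θ i s) k * v k) = s * v i + c₂ := by
    intro s
    exact sumUpd θ v i s
  have hfun : (fun s => Tm n a b P (Function.update θ i s, v))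
      = fun s => Cv * (s ^ b i * c₁) * P.eval (logis (s * v i + c₂)) := by
    funext s
    simp only [Tm]
    rw [hprod s, hsum s]
  set S : ℝ := θ i * v i + c₂ with hS
  have hSsum : (∑ k, θ k * v k) = S := by
    rw [hS, hc₂]
    exact (Finset.add_sum_erase _ _ (Finset.mem_univ i)).symm
  have hinner : HasDerivAt (fun s : ℝ => s * v i + c₂) (v i) (θ i) := by
    simpa using ((hasDerivAt_id (θ i)).mul_const (v i)).add_const c₂
  have hg : HasDerivAt (fun s : ℝ => logis (s * v i + c₂))
      ((logis S - logis S ^ 2) * v i) (θ i) :=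
    by have := (hasDerivAt_logis S).comp (θ i) hinner; exact this
  have hP : HasDerivAt (fun s : ℝ => P.eval (logis (s * v i + c₂)))
      (P.derivative.eval (logis S) * ((logis S - logis S ^ 2) * v i)) (θ i) :=
    by have := (P.hasDerivAt (logis S)).comp (θ i) hg; exact this
  have hpow : HasDerivAt (fun s : ℝ => Cv * (s ^ b i * c₁))
      (Cv * ((b i : ℝ) * θ i ^ (b i - 1) * c₁)) (θ i) := by
    simpa [mul_assoc] using ((hasDerivAt_pow (b i) (θ i)).mul_const c₁).const_mul Cv
  have hmain := hpow.mul hP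
  rw [hfun]
  refine HasDerivAt.congr_deriv hmain ?_
  have h1 : (∏ k, θ k ^ (Function.update b i (b i - 1)) k)
      = θ i ^ (b i - 1) * c₁ := by
    have := prodUpd θ b i (θ i) (b i - 1)
    rwa [Function.update_eq_self] at this
  have h2 : (∏ k, v k ^ (Function.update a i (a i + 1)) k) = v i * Cv := by
    have := prodUpd v a i (v i) (a i + 1)
    rw [Function.update_eq_self] at this
    rw [this, hCv, ← Finset.mul_prod_erase _ _ (Finset.mem_univ i), pow_succ]
    ring
  have hθb : (∏ k, θ k ^ b k) = θ i ^ b i * c₁ :=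
    (Finset.mul_prod_erase _ _ (Finset.mem_univ i)).symm
  simp only [Tm]
  rw [hSsum, h1, h2, hθb, Polynomial.smul_eq_C_mul]
  simp only [Polynomial.eval_mul, Polynomial.eval_sub, Polynomial.eval_pow,
    Polynomial.eval_X, Polynomial.eval_C]
  ring

lemma Rep19.hasDeriv {α β : Fin n → ℕ} {F} (h : Rep19 n α β F) (i : Fin n) :
    ∃ F', Rep19 n (Function.update α i (α i + 1)) β F' ∧
      ∀ θ v, HasDerivAt (fun s => F (Function.update θ i s, v)) (F' (θ, v)) (θ i) := by
  induction h with
  | term a b P ha hb =>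
      refine ⟨fun p => Tm n a (Function.update b i (b i - 1)) ((b i : ℝ) • P) p +
          Tm n (Function.update a i (a i + 1)) b
            (P.derivative * (Polynomial.X - Polynomial.X ^ 2)) p,
        Rep19.add (Rep19.term _ _ _ ?_ ?_) (Rep19.term _ _ _ ?_ ?_),
        fun θ v => hasDerivAt_Tm a b P i θ v⟩
      · intro j
        rcases eq_or_ne j i with rfl | hj
        · simpa using (ha j).trans (Nat.le_succ _)
        · simpa [Function.update_of_ne hj] using ha j
      · intro j
        rcases eq_or_ne j i with rfl | hj
        · simpa using (Nat.sub_le _ _).trans (hb j)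
        · simpa [Function.update_of_ne hj] using hb j
      · intro j
        rcases eq_or_ne j i with rfl | hj
        · simpa using Nat.succ_le_succ (ha j)
        · simpa [Function.update_of_ne hj] using ha j
      · exact hb
  | add h1 h2 ih1 ih2 =>
      obtain ⟨F₁, hF₁, hd₁⟩ := ih1
      obtain ⟨F₂, hF₂, hd₂⟩ := ih2
      exact ⟨fun p => F₁ p + F₂ p, Rep19.add hF₁ hF₂,
        fun θ v => (hd₁ θ v).add (hd₂ θ v)⟩

lemma pdTheta_rep (i : Fin n) {α β : Fin n → ℕ} {F} (h : Rep19 n α β F) :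
    Rep19 n (Function.update α i (α i + 1)) β (pdTheta i F) := by
  obtain ⟨F', hF', hd⟩ := h.hasDeriv i
  have : pdTheta i F = F' := by
    funext p
    exact (hd p.1 p.2).deriv
  rwa [this]

lemma pdV_rep (i : Fin n) {α β : Fin n → ℕ} {F} (h : Rep19 n α β F) :
    Rep19 n α (Function.update β i (β i + 1)) (pdV i F) := by
  have h2 := (pdTheta_rep i h.swap).swap
  have heq : (fun p : (Fin n → ℝ) × (Fin n → ℝ) =>
      pdTheta i (fun q => F (q.2, q.1)) (p.2, p.1)) = pdV i F := rfl
  rwa [heq] at h2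

lemma iter_theta_rep (i : Fin n) (k : ℕ) {α β : Fin n → ℕ} {F} (h : Rep19 n α β F) :
    Rep19 n (Function.update α i (α i + k)) β ((pdTheta i)^[k] F) := by
  induction k with
  | zero => simpa [Function.update_eq_self] using h
  | succ k ih =>
      rw [Function.iterate_succ_apply']
      have h2 := pdTheta_rep i ih
      have heq : Function.update (Function.update α i (α i + k)) i
          (Function.update α i (α i + k) i + 1) = Function.update α i (α i + (k + 1)) := by
        funext j
        rcases eq_or_ne j i with rfl | hj
        · simp; omega
        · simp [Function.update_of_ne hj]
      rwa [heq] at h2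

lemma iter_v_rep (i : Fin n) (k : ℕ) {α β : Fin n → ℕ} {F} (h : Rep19 n α β F) :
    Rep19 n α (Function.update β i (β i + k)) ((pdV i)^[k] F) := by
  induction k with
  | zero => simpa [Function.update_eq_self] using h
  | succ k ih =>
      rw [Function.iterate_succ_apply']
      have h2 := pdV_rep i ih
      have heq : Function.update (Function.update β i (β i + k)) i
          (Function.update β i (β i + k) i + 1) = Function.update β i (β i + (k + 1)) := by
        funext j
        rcases eq_or_ne j i with rfl | hj
        · simp; omega
        · simp [Function.update_of_ne hj]
      rwa [heq] at h2

lemma foldr_theta_rep (α : Fin n → ℕ) (L : List (Fin n)) (hL : L.Nodup)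
    {α₀ β : Fin n → ℕ} {F} (h : Rep19 n α₀ β F) :
    Rep19 n (fun j => α₀ j + if j ∈ L then α j else 0) β
      (L.foldr (fun i G => (pdTheta i)^[α i] G) F) := by
  induction L with
  | nil => simpa using h
  | cons i L' ih =>
      obtain ⟨hiL, hL'⟩ := List.nodup_cons.mp hL
      have h2 := iter_theta_rep i (α i) (ih hL')
      have heq : Function.update (fun j => α₀ j + if j ∈ L' then α j else 0) i
          ((fun j => α₀ j + if j ∈ L' then α j else 0) i + α i)
          = fun j => α₀ j + if j ∈ i :: L' then α j else 0 := by
        funext j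
        rcases eq_or_ne j i with rfl | hj
        · simp [hiL]
        · simp [Function.update_of_ne hj, List.mem_cons, hj]
      rwa [heq] at h2

lemma foldr_v_rep (β : Fin n → ℕ) (L : List (Fin n)) (hL : L.Nodup)
    {α β₀ : Fin n → ℕ} {F} (h : Rep19 n α β₀ F) :
    Rep19 n α (fun j => β₀ j + if j ∈ L then β j else 0)
      (L.foldr (fun i G => (pdV i)^[β i] G) F) := by
  induction L with
  | nil => simpa using h
  | cons i L' ih =>
      obtain ⟨hiL, hL'⟩ := List.nodup_cons.mp hL
      have h2 := iter_v_rep i (β i) (ih hL')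
      have heq : Function.update (fun j => β₀ j + if j ∈ L' then β j else 0) i
          ((fun j => β₀ j + if j ∈ L' then β j else 0) i + β i)
          = fun j => β₀ j + if j ∈ i :: L' then β j else 0 := by
        funext j
        rcases eq_or_ne j i with rfl | hj
        · simp [hiL]
        · simp [Function.update_of_ne hj, List.mem_cons, hj]
      rwa [heq] at h2

lemma multiPdTheta_rep (α : Fin n → ℕ) {α₀ β : Fin n → ℕ} {F} (h : Rep19 n α₀ β F) :
    Rep19 n (fun j => α₀ j + α j) β (multiPdTheta α F) := by
  have := foldr_theta_rep α (List.finRange n) (List.nodup_finRange n) h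
  simpa [multiPdTheta, List.mem_finRange] using this

lemma multiPdV_rep (β : Fin n → ℕ) {α β₀ : Fin n → ℕ} {F} (h : Rep19 n α β₀ F) :
    Rep19 n α (fun j => β₀ j + β j) (multiPdV β F) := by
  have := foldr_v_rep β (List.finRange n) (List.nodup_finRange n) h
  simpa [multiPdV, List.mem_finRange] using this

lemma Tm_bound (α β a b : Fin n → ℕ) (ha : ∀ i, a i ≤ α i) (hb : ∀ i, b i ≤ β i)
    (P : Polynomial ℝ) :
    ∃ c : ℝ, 0 < c ∧ ∀ θ v : Fin n → ℝ,
      |Tm n a b P (θ, v)| ≤ c * (∏ i, (1 + |v i|) ^ α i) * ∏ i, (1 + |θ i|) ^ β i := by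
  obtain ⟨C, hC⟩ := (isCompact_Icc : IsCompact (Set.Icc (0:ℝ) 1)).exists_bound_of_continuousOn
    (P.continuous_aeval).continuousOn
  have hC0 : 0 ≤ C := le_trans (norm_nonneg _) (hC 0 ⟨le_refl 0, zero_le_one⟩)
  refine ⟨C + 1, by linarith, fun θ v => ?_⟩
  have hv : (∏ i, |v i| ^ a i) ≤ ∏ i, (1 + |v i|) ^ α i := by
    apply Finset.prod_le_prod (fun i _ => by positivity)
    intro i _
    calc |v i| ^ a i ≤ (1 + |v i|) ^ a i :=
          pow_le_pow_left₀ (abs_nonneg _) (by linarith [abs_nonneg (v i)]) _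
      _ ≤ (1 + |v i|) ^ α i :=
          pow_le_pow_right₀ (by linarith [abs_nonneg (v i)]) (ha i)
  have hθ : (∏ i, |θ i| ^ b i) ≤ ∏ i, (1 + |θ i|) ^ β i := by
    apply Finset.prod_le_prod (fun i _ => by positivity)
    intro i _
    calc |θ i| ^ b i ≤ (1 + |θ i|) ^ b i :=
          pow_le_pow_left₀ (abs_nonneg _) (by linarith [abs_nonneg (θ i)]) _
      _ ≤ (1 + |θ i|) ^ β i :=
          pow_le_pow_right₀ (by linarith [abs_nonneg (θ i)]) (hb i)
  have hPev : |P.eval (logis (∑ i, θ i * v i))| ≤ C + 1 := by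
    have := hC (logis (∑ i, θ i * v i)) ⟨logis_nonneg _, logis_le_one _⟩
    rw [Real.norm_eq_abs] at this
    simpa [Polynomial.aeval_def] using this.trans (by linarith)
  calc |Tm n a b P (θ, v)|
      = (∏ i, |v i| ^ a i) * (∏ i, |θ i| ^ b i) * |P.eval (logis (∑ i, θ i * v i))| := by
        simp only [Tm, abs_mul, Finset.abs_prod, abs_pow]
    _ ≤ (∏ i, (1 + |v i|) ^ α i) * (∏ i, (1 + |θ i|) ^ β i) * (C + 1) := by
        gcongr
    _ = (C + 1) * (∏ i, (1 + |v i|) ^ α i) * ∏ i, (1 + |θ i|) ^ β i := by ring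

lemma Rep19.bound {α β : Fin n → ℕ} {F} (h : Rep19 n α β F) :
    ∃ c : ℝ, 0 < c ∧ ∀ θ v : Fin n → ℝ,
      |F (θ, v)| ≤ c * (∏ i, (1 + |v i|) ^ α i) * ∏ i, (1 + |θ i|) ^ β i := by
  induction h with
  | term a b P ha hb => exact Tm_bound α β a b ha hb P
  | add h1 h2 ih1 ih2 =>
      obtain ⟨c₁, hc₁, hb₁⟩ := ih1
      obtain ⟨c₂, hc₂, hb₂⟩ := ih2
      refine ⟨c₁ + c₂, by linarith, fun θ v => le_trans (abs_add_le _ _) ?_⟩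
      have hr : (c₁ + c₂) * (∏ i, (1 + |v i|) ^ α i) * (∏ i, (1 + |θ i|) ^ β i)
          = c₁ * (∏ i, (1 + |v i|) ^ α i) * (∏ i, (1 + |θ i|) ^ β i)
            + c₂ * (∏ i, (1 + |v i|) ^ α i) * (∏ i, (1 + |θ i|) ^ β i) := by ring
      rw [hr]
      exact add_le_add (hb₁ θ v) (hb₂ θ v)

lemma base_rep (n : ℕ) : Rep19 n (fun _ => 0) (fun _ => 0)
    (fun p : (Fin n → ℝ) × (Fin n → ℝ) => 1 / (1 + Real.exp (-(∑ i, p.1 i * p.2 i)))) := by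
  have hf : (fun p : (Fin n → ℝ) × (Fin n → ℝ) => 1 / (1 + Real.exp (-(∑ i, p.1 i * p.2 i))))
      = Tm n (fun _ => 0) (fun _ => 0) Polynomial.X := by
    funext p
    simp [Tm, logis, one_div]
  rw [hf]
  exact Rep19.term _ _ _ (fun i => le_refl 0) (fun i => le_refl 0)

end Aux19

/-- Lemma 17(i) of the paper: the multivariate logit integrand
`f(θ, v) = 1/(1 + exp(-⟨θ, v⟩))` is infinitely differentiable and its mixed partial
derivatives satisfy `|D_α^{(θ)} D_β^{(v)} f(θ,v)| ≤ c ∏(1+|v_i|)^{α_i} ∏(1+|θ_i|)^{β_i}`. -/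
theorem stmt_19 (n : ℕ) (hn : 1 ≤ n) :
    (∀ k : ℕ, ContDiff ℝ k (fun p : (Fin n → ℝ) × (Fin n → ℝ) =>
      1 / (1 + Real.exp (-(∑ i, p.1 i * p.2 i))))) ∧
    ∀ α β : Fin n → ℕ, ∃ c : ℝ, 0 < c ∧ ∀ θ v : Fin n → ℝ,
      |multiPdTheta α (multiPdV β (fun p : (Fin n → ℝ) × (Fin n → ℝ) =>
          1 / (1 + Real.exp (-(∑ i, p.1 i * p.2 i))))) (θ, v)| ≤
        c * (∏ i, (1 + |v i|) ^ α i) * ∏ i, (1 + |θ i|) ^ β i := by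
  constructor
  · intro k
    have hS : ContDiff ℝ (⊤ : ℕ∞) (fun p : (Fin n → ℝ) × (Fin n → ℝ) => ∑ i, p.1 i * p.2 i) := by
      apply ContDiff.sum
      intro i _
      exact (((ContinuousLinearMap.proj i : (Fin n → ℝ) →L[ℝ] ℝ).contDiff).comp
        contDiff_fst).mul
        (((ContinuousLinearMap.proj i : (Fin n → ℝ) →L[ℝ] ℝ).contDiff).comp contDiff_snd)
    have heq : (fun p : (Fin n → ℝ) × (Fin n → ℝ) =>
        1 / (1 + Real.exp (-(∑ i, p.1 i * p.2 i))))
        = fun p => logis (∑ i, p.1 i * p.2 i) := by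
      funext p
      simp [logis, one_div]
    rw [heq]
    exact (contDiff_logis.comp hS).of_le (mod_cast le_top)
  · intro α β
    have h1 := multiPdV_rep β (base_rep n)
    have h2 := multiPdTheta_rep α h1
    have h3 := h2.mono (α' := α) (β' := β) (fun i => by omega) (fun i => by omega)
    exact h3.bound
end
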